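/- arXiv:2503.02159 — 4 statements merged into one kernel-verified Lean document; each statement's English description precedes it below -/
import Mathlib

section
/- Monotonicity of the explicit discrete operators: Assume condition (N2). For t ∈ ℕ^τ_T, (a,b) ∈ A×B and bounded U : ℤ^d_h → ℝ define F_t^{a,b}(U)(x) := U(x) + τ·L(t,x,∇^hU(x))(a,b) + (τ/2)Σ_{i=1}^d(Σ_i(t,x)+ν_h)Δ_i^hU(x), and F_t(U)(x) := U(x) + τ·H(t,x,∇^hU(x)) + (τ/2)Σ_{i=1}^d(Σ_i(t,x)+ν_h)Δ_i^hU(x). Then for any bounded U, V : ℤ^d_h → ℝ with U ≤ V pointwise on ℤ^d_h, one has F_t^{a,b}(U) ≤ F_t^{a,b}(V) and F_t(U) ≤ F_t(V) pointwise on ℤ^d_h. -/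
open scoped BigOperators

noncomputable section

/-- Forward difference quotient `D_i^h φ(x) = (φ(x+h e_i) - φ(x))/h`. -/
def Dp {d : ℕ} (h : ℝ) (φ : (Fin d → ℝ) → ℝ) (x : Fin d → ℝ) (i : Fin d) : ℝ :=
  (φ (Function.update x i (x i + h)) - φ x) / h

/-- Backward difference quotient `D_{-i}^h φ(x) = (φ(x-h e_i) - φ(x))/h`. -/
def Dm {d : ℕ} (h : ℝ) (φ : (Fin d → ℝ) → ℝ) (x : Fin d → ℝ) (i : Fin d) : ℝ :=
  (φ (Function.update x i (x i - h)) - φ x) / h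

/-- Central difference gradient `∇^h`. -/
def cgrad {d : ℕ} (h : ℝ) (φ : (Fin d → ℝ) → ℝ) (x : Fin d → ℝ) : Fin d → ℝ :=
  fun i => (φ (Function.update x i (x i + h)) - φ (Function.update x i (x i - h))) / (2 * h)

/-- Discrete second difference `Δ_i^h`. -/
def lap1 {d : ℕ} (h : ℝ) (φ : (Fin d → ℝ) → ℝ) (x : Fin d → ℝ) (i : Fin d) : ℝ :=
  (φ (Function.update x i (x i + h)) - 2 * φ x + φ (Function.update x i (x i - h))) / h ^ 2

/-- Backward time difference quotient `∂_t^τ`. -/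
def dtT {d : ℕ} (τ : ℝ) (φ : ℝ → (Fin d → ℝ) → ℝ) (t : ℝ) (x : Fin d → ℝ) : ℝ :=
  (φ t x - φ (t - τ) x) / τ

/-- Euclidean norm of a vector in `Fin d → ℝ`. -/
def nrm {d : ℕ} (v : Fin d → ℝ) : ℝ := Real.sqrt (∑ i, v i ^ 2)

/-- The time grid `ℕ^τ_T = {0, τ, 2τ, …, T}`. -/
def timeGrid (τ T t : ℝ) : Prop := (∃ k : ℕ, t = k * τ) ∧ t ≤ T

/-- The space grid `ℤ^d_h = hℤ^d`. -/
def spaceGrid {d : ℕ} (h : ℝ) (x : Fin d → ℝ) : Prop := ∀ i, ∃ z : ℤ, x i = z * h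

/-- The running cost `L(t,x,p)(a,b) = c(t,x,a,b) + p · f(t,x,a,b)`. -/
def Lrun {d m₁ m₂ : ℕ} (c : ℝ → (Fin d → ℝ) → (Fin m₁ → ℝ) → (Fin m₂ → ℝ) → ℝ)
    (f : ℝ → (Fin d → ℝ) → (Fin m₁ → ℝ) → (Fin m₂ → ℝ) → Fin d → ℝ)
    (t : ℝ) (x p : Fin d → ℝ) (a : Fin m₁ → ℝ) (b : Fin m₂ → ℝ) : ℝ :=
  c t x a b + ∑ i, p i * f t x a b i

/-- The sup-inf (Isaacs) Hamiltonian `H(t,x,p) = max_{b ∈ B} min_{a ∈ A} L(t,x,p)(a,b)`. -/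
def Ham {d m₁ m₂ : ℕ} (A : Set (Fin m₁ → ℝ)) (B : Set (Fin m₂ → ℝ))
    (c : ℝ → (Fin d → ℝ) → (Fin m₁ → ℝ) → (Fin m₂ → ℝ) → ℝ)
    (f : ℝ → (Fin d → ℝ) → (Fin m₁ → ℝ) → (Fin m₂ → ℝ) → Fin d → ℝ)
    (t : ℝ) (x p : Fin d → ℝ) : ℝ :=
  sSup ((fun b => sInf ((fun a => Lrun c f t x p a b) '' A)) '' B)

/-- monotonicity of the explicit discrete operators `F_t^{a,b}` and `F_t`:
under condition (N2), both operators are monotone on bounded grid functions. -/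
theorem monotonicity_discrete_operators
    {d m₁ m₂ : ℕ} (hd : 0 < d)
    {A : Set (Fin m₁ → ℝ)} {B : Set (Fin m₂ → ℝ)}
    (hA : IsCompact A) (hAne : A.Nonempty) (hB : IsCompact B) (hBne : B.Nonempty)
    (c : ℝ → (Fin d → ℝ) → (Fin m₁ → ℝ) → (Fin m₂ → ℝ) → ℝ)
    (f : ℝ → (Fin d → ℝ) → (Fin m₁ → ℝ) → (Fin m₂ → ℝ) → Fin d → ℝ)
    (hc_cont : Continuous fun q : ℝ × (Fin d → ℝ) × (Fin m₁ → ℝ) × (Fin m₂ → ℝ) =>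
      c q.1 q.2.1 q.2.2.1 q.2.2.2)
    (hf_cont : Continuous fun q : ℝ × (Fin d → ℝ) × (Fin m₁ → ℝ) × (Fin m₂ → ℝ) =>
      f q.1 q.2.1 q.2.2.1 q.2.2.2)
    (Mc Mf Mg : ℝ)
    (hMc : ∀ t x a b, |c t x a b| ≤ Mc)
    (hMf : ∀ t x a b, nrm (f t x a b) ≤ Mf)
    (Sg : Fin d → ℝ → (Fin d → ℝ) → ℝ)
    (hSg_nonneg : ∀ i t x, 0 ≤ Sg i t x)
    (MS : ℝ) (hMS : ∀ i t x, Sg i t x ≤ MS)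
    (g : (Fin d → ℝ) → ℝ) (hMg : ∀ x, |g x| ≤ Mg)
    (T τ h ν : ℝ) (hT : 0 < T)
    (hτ : τ ∈ Set.Ioo (0:ℝ) 1) (hh : h ∈ Set.Ioo (0:ℝ) 1)
    (hTτ : ∃ N : ℕ, T = N * τ) (hν : 0 ≤ ν)
    (hN2a : ∀ i t x a b, h * |f t x a b i| ≤ ν + Sg i t x)
    (hN2b : ∀ t x, (d : ℝ) * ν + ∑ i, Sg i t x ≤ h ^ 2 / τ)
    :
    ∀ t : ℝ, timeGrid τ T t →
    ∀ a ∈ A, ∀ b ∈ B,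
    ∀ U V : (Fin d → ℝ) → ℝ,
      (∃ M : ℝ, ∀ x, spaceGrid h x → |U x| ≤ M) →
      (∃ M : ℝ, ∀ x, spaceGrid h x → |V x| ≤ M) →
      (∀ x, spaceGrid h x → U x ≤ V x) →
      ∀ x, spaceGrid h x →
        (U x + τ * Lrun c f t x (cgrad h U x) a b
            + τ / 2 * ∑ i, (Sg i t x + ν) * lap1 h U x i
          ≤ V x + τ * Lrun c f t x (cgrad h V x) a b
            + τ / 2 * ∑ i, (Sg i t x + ν) * lap1 h V x i)
        ∧ (U x + τ * Ham A B c f t x (cgrad h U x)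
            + τ / 2 * ∑ i, (Sg i t x + ν) * lap1 h U x i
          ≤ V x + τ * Ham A B c f t x (cgrad h V x)
            + τ / 2 * ∑ i, (Sg i t x + ν) * lap1 h V x i) := by
  intro t _ a ha b hb U V _ _ hUV
  have h0 : (0:ℝ) < h := hh.1
  have hτ0 : (0:ℝ) < τ := hτ.1
  have hne : (h:ℝ) ≠ 0 := ne_of_gt h0
  -- grid preservation
  have gridP : ∀ x : Fin d → ℝ, spaceGrid h x → ∀ i, spaceGrid h (Function.update x i (x i + h)) := by
    intro x hx i j
    by_cases hji : j = i
    · subst hji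
      rcases hx j with ⟨z, hz⟩
      exact ⟨z + 1, by simp only [Function.update_self, hz]; push_cast; ring⟩
    · rcases hx j with ⟨z, hz⟩
      exact ⟨z, by simp [Function.update_of_ne hji, hz]⟩
  have gridM : ∀ x : Fin d → ℝ, spaceGrid h x → ∀ i, spaceGrid h (Function.update x i (x i - h)) := by
    intro x hx i j
    by_cases hji : j = i
    · subst hji
      rcases hx j with ⟨z, hz⟩
      exact ⟨z - 1, by simp only [Function.update_self, hz]; push_cast; ring⟩
    · rcases hx j with ⟨z, hz⟩
      exact ⟨z, by simp [Function.update_of_ne hji, hz]⟩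
  -- Part 1, for all (a', b')
  have part1 : ∀ a' ∈ A, ∀ b' ∈ B, ∀ x : Fin d → ℝ, spaceGrid h x →
      U x + τ * Lrun c f t x (cgrad h U x) a' b'
        + τ / 2 * ∑ i, (Sg i t x + ν) * lap1 h U x i
      ≤ V x + τ * Lrun c f t x (cgrad h V x) a' b'
        + τ / 2 * ∑ i, (Sg i t x + ν) * lap1 h V x i := by
    intro a' _ b' _ x hx
    set P : Fin d → (Fin d → ℝ) := fun i => Function.update x i (x i + h) with hP
    set M : Fin d → (Fin d → ℝ) := fun i => Function.update x i (x i - h) with hM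
    have key : ∀ i : Fin d,
        τ * (cgrad h V x i * f t x a' b' i) - τ * (cgrad h U x i * f t x a' b' i)
          + (τ / 2 * ((Sg i t x + ν) * lap1 h V x i)
             - τ / 2 * ((Sg i t x + ν) * lap1 h U x i))
          + (V x - U x) * (τ / h ^ 2 * (Sg i t x + ν))
        = τ / (2 * h ^ 2) * ((Sg i t x + ν) + h * f t x a' b' i) * (V (P i) - U (P i))
          + τ / (2 * h ^ 2) * ((Sg i t x + ν) - h * f t x a' b' i) * (V (M i) - U (M i)) := by
      intro i
      simp only [cgrad, lap1, hP, hM]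
      field_simp
      ring
    have hsum := Finset.sum_congr rfl (fun i (_ : i ∈ Finset.univ) => key i)
    simp only [Finset.sum_add_distrib, Finset.sum_sub_distrib, ← Finset.mul_sum] at hsum
    rw [← sub_nonneg]
    have hfinal :
        V x + τ * Lrun c f t x (cgrad h V x) a' b'
            + τ / 2 * ∑ i, (Sg i t x + ν) * lap1 h V x i
          - (U x + τ * Lrun c f t x (cgrad h U x) a' b'
            + τ / 2 * ∑ i, (Sg i t x + ν) * lap1 h U x i)
        = (V x - U x) * (1 - τ / h ^ 2 * ∑ i, (Sg i t x + ν))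
          + ∑ i, (τ / (2 * h ^ 2) * ((Sg i t x + ν) + h * f t x a' b' i) * (V (P i) - U (P i))
              + τ / (2 * h ^ 2) * ((Sg i t x + ν) - h * f t x a' b' i) * (V (M i) - U (M i))) := by
      simp only [Lrun, Finset.sum_add_distrib]
      linear_combination hsum
    rw [hfinal]
    have hS5 : τ / h ^ 2 * ∑ i, (Sg i t x + ν) ≤ 1 := by
      have h1 : ∑ i, (Sg i t x + ν) ≤ h ^ 2 / τ := by
        have := hN2b t x
        have h2 : ∑ i : Fin d, (Sg i t x + ν) = (∑ i, Sg i t x) + (d : ℝ) * ν := by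
          rw [Finset.sum_add_distrib, Finset.sum_const, Finset.card_univ, Fintype.card_fin,
            nsmul_eq_mul]
        linarith
      calc τ / h ^ 2 * ∑ i, (Sg i t x + ν) ≤ τ / h ^ 2 * (h ^ 2 / τ) := by
            apply mul_le_mul_of_nonneg_left h1 (by positivity)
        _ = 1 := by field_simp
    apply add_nonneg
    · apply mul_nonneg
      · linarith [hUV x hx]
      · linarith
    · apply Finset.sum_nonneg
      intro i _
      apply add_nonneg
      · apply mul_nonneg
        · apply mul_nonneg (by positivity)
          nlinarith [hN2a i t x a' b', neg_abs_le (f t x a' b' i), h0.le]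
        · have := hUV (P i) (gridP x hx i)
          linarith
      · apply mul_nonneg
        · apply mul_nonneg (by positivity)
          nlinarith [hN2a i t x a' b', le_abs_self (f t x a' b' i), h0.le]
        · have := hUV (M i) (gridM x hx i)
          linarith
  intro x hx
  refine ⟨part1 a ha b hb x hx, ?_⟩
  -- Part 2 : the Hamiltonian
  set pU := cgrad h U x with hpU
  set pV := cgrad h V x with hpV
  set D : ℝ := (V x + τ / 2 * ∑ i, (Sg i t x + ν) * lap1 h V x i)
      - (U x + τ / 2 * ∑ i, (Sg i t x + ν) * lap1 h U x i) with hD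
  -- bound on |Lrun|
  have hMf0 : 0 ≤ Mf := by
    obtain ⟨a0, _⟩ := hAne
    obtain ⟨b0, _⟩ := hBne
    have := hMf t x a0 b0
    have h1 : 0 ≤ nrm (f t x a0 b0) := Real.sqrt_nonneg _
    linarith
  have habsf : ∀ (a' : Fin m₁ → ℝ) (b' : Fin m₂ → ℝ) (i : Fin d), |f t x a' b' i| ≤ Mf := by
    intro a' b' i
    have h1 : |f t x a' b' i| ≤ nrm (f t x a' b') := by
      rw [show |f t x a' b' i| = Real.sqrt (f t x a' b' i ^ 2) by
        rw [Real.sqrt_sq_eq_abs]]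
      apply Real.sqrt_le_sqrt
      exact Finset.single_le_sum (fun j _ => sq_nonneg (f t x a' b' j)) (Finset.mem_univ i)
    linarith [hMf t x a' b']
  have hLb : ∀ (p : Fin d → ℝ) (a' : Fin m₁ → ℝ) (b' : Fin m₂ → ℝ),
      |Lrun c f t x p a' b'| ≤ Mc + (∑ i, |p i|) * Mf := by
    intro p a' b'
    have h1 : |∑ i, p i * f t x a' b' i| ≤ (∑ i, |p i|) * Mf := by
      calc |∑ i, p i * f t x a' b' i| ≤ ∑ i, |p i * f t x a' b' i| :=
            Finset.abs_sum_le_sum_abs _ _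
        _ ≤ ∑ i, |p i| * Mf := by
            apply Finset.sum_le_sum
            intro i _
            rw [abs_mul]
            exact mul_le_mul_of_nonneg_left (habsf a' b' i) (abs_nonneg _)
        _ = (∑ i, |p i|) * Mf := by rw [Finset.sum_mul]
    calc |Lrun c f t x p a' b'| ≤ |c t x a' b'| + |∑ i, p i * f t x a' b' i| :=
          abs_add_le _ _
      _ ≤ Mc + (∑ i, |p i|) * Mf := add_le_add (hMc t x a' b') h1
  -- the inner infima
  have hbddBelow : ∀ (p : Fin d → ℝ) (b' : Fin m₂ → ℝ),
      BddBelow ((fun a' => Lrun c f t x p a' b') '' A) := by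
    intro p b'
    refine ⟨-(Mc + (∑ i, |p i|) * Mf), ?_⟩
    rintro y ⟨a', _, rfl⟩
    linarith [abs_le.mp (hLb p a' b')]
  have himgne : ∀ (p : Fin d → ℝ) (b' : Fin m₂ → ℝ),
      ((fun a' => Lrun c f t x p a' b') '' A).Nonempty := fun p b' => hAne.image _
  have hkey : ∀ a' ∈ A, ∀ b' ∈ B,
      Lrun c f t x pU a' b' ≤ Lrun c f t x pV a' b' + D / τ := by
    intro a' ha' b' hb'
    have := part1 a' ha' b' hb' x hx
    rw [← sub_nonneg] at this
    rw [← sub_nonneg]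
    have h2 : Lrun c f t x pV a' b' + D / τ - Lrun c f t x pU a' b'
        = (1/τ) * ((V x + τ * Lrun c f t x pV a' b'
            + τ / 2 * ∑ i, (Sg i t x + ν) * lap1 h V x i)
          - (U x + τ * Lrun c f t x pU a' b'
            + τ / 2 * ∑ i, (Sg i t x + ν) * lap1 h U x i)) := by
      rw [hD]; field_simp; ring
    rw [h2]
    exact mul_nonneg (by positivity) this
  have hInf : ∀ b' ∈ B,
      sInf ((fun a' => Lrun c f t x pU a' b') '' A)
        ≤ sInf ((fun a' => Lrun c f t x pV a' b') '' A) + D / τ := by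
    intro b' hb'
    rw [← sub_le_iff_le_add]
    apply le_csInf (himgne pV b')
    rintro y ⟨a', ha', rfl⟩
    rw [sub_le_iff_le_add]
    calc sInf ((fun a' => Lrun c f t x pU a' b') '' A) ≤ Lrun c f t x pU a' b' :=
          csInf_le (hbddBelow pU b') ⟨a', ha', rfl⟩
      _ ≤ Lrun c f t x pV a' b' + D / τ := hkey a' ha' b' hb'
  have hbddAboveV : BddAbove ((fun b' => sInf ((fun a' => Lrun c f t x pV a' b') '' A)) '' B) := by
    obtain ⟨a0, ha0⟩ := hAne
    refine ⟨Mc + (∑ i, |pV i|) * Mf, ?_⟩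
    rintro y ⟨b', _, rfl⟩
    calc sInf ((fun a' => Lrun c f t x pV a' b') '' A) ≤ Lrun c f t x pV a0 b' :=
          csInf_le (hbddBelow pV b') ⟨a0, ha0, rfl⟩
      _ ≤ Mc + (∑ i, |pV i|) * Mf := (abs_le.mp (hLb pV a0 b')).2
  have hHam : Ham A B c f t x pU ≤ Ham A B c f t x pV + D / τ := by
    rw [Ham]
    apply csSup_le (hBne.image _)
    rintro y ⟨b', hb', rfl⟩
    calc sInf ((fun a' => Lrun c f t x pU a' b') '' A)
        ≤ sInf ((fun a' => Lrun c f t x pV a' b') '' A) + D / τ := hInf b' hb'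
      _ ≤ Ham A B c f t x pV + D / τ := by
          rw [Ham]
          have := le_csSup hbddAboveV (Set.mem_image_of_mem _ hb')
          linarith
  have hτmul : τ * Ham A B c f t x pU ≤ τ * Ham A B c f t x pV + D := by
    have := mul_le_mul_of_nonneg_left hHam hτ0.le
    have h3 : τ * (Ham A B c f t x pV + D / τ) = τ * Ham A B c f t x pV + D := by
      rw [mul_add, mul_div_cancel₀ _ (ne_of_gt hτ0)]
    exact this.trans_eq h3
  rw [hD] at hτmul
  linarith
end
end

section
/- Discrete comparison principle (Lemma 2.1): Assume condition (N2). Let V be a bounded supersolution of the scheme (4.2), i.e. ∂_t^τV(t,x) + H(t,x,∇^hV(t,x)) ≤ −(1/2)Σ_{i=1}^d(Σ_i(t,x)+ν_h)Δ_i^hV(t,x) for all (t,x) ∈ Ω^{τ,h}_T with t ≥ τ and V(T,·) ≥ g on ℤ^d_h, and let Ṽ be a bounded subsolution (same inequalities reversed). Then Ṽ ≤ V everywhere on Ω^{τ,h}_T. The same conclusion holds for the linear scheme in which H(t,x,p) is replaced by L(t,x,p)(α(t,x),β(t,x)) for arbitrary fixed policies α : Ω^{τ,h}_T → A and β : Ω^{τ,h}_T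 → B. -/
open scoped BigOperators

noncomputable section

lemma core_ineq {d : ℕ} (τ h : ℝ) (hτ0 : 0 < τ) (hh0 : 0 < h)
    (S F P M : Fin d → ℝ) (z : ℝ)
    (hF : ∀ i, h * |F i| ≤ S i)
    (hSsum : ∑ i, S i ≤ h ^ 2 / τ)
    (hz : z ≤ 0) (hP : ∀ i, P i ≤ 0) (hM : ∀ i, M i ≤ 0) :
    z + τ * ∑ i, (P i - M i) / (2 * h) * F i
      + τ / 2 * ∑ i, S i * ((P i - 2 * z + M i) / h ^ 2) ≤ 0 := by
  have hne : h ≠ 0 := ne_of_gt hh0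
  have h2 : (0:ℝ) < h ^ 2 := by positivity
  have e1 : τ * ∑ i, (P i - M i) / (2 * h) * F i
      + τ / 2 * ∑ i, S i * ((P i - 2 * z + M i) / h ^ 2)
      = ∑ i, (τ * ((P i - M i) / (2 * h) * F i)
          + τ / 2 * (S i * ((P i - 2 * z + M i) / h ^ 2))) := by
    rw [Finset.mul_sum, Finset.mul_sum, ← Finset.sum_add_distrib]
  have per : ∀ i ∈ Finset.univ, τ * ((P i - M i) / (2 * h) * F i)
      + τ / 2 * (S i * ((P i - 2 * z + M i) / h ^ 2)) ≤ (-z) * (τ / h ^ 2 * S i) := by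
    intro i _
    have habs : |h * F i| ≤ S i := by rw [abs_mul, abs_of_pos hh0]; exact hF i
    have hlo : -(S i) ≤ h * F i := neg_le_of_abs_le habs
    have hhi : h * F i ≤ S i := le_of_abs_le habs
    have hcp : 0 ≤ F i / (2 * h) + S i / (2 * h ^ 2) := by
      have e : F i / (2 * h) + S i / (2 * h ^ 2) = (h * F i + S i) / (2 * h ^ 2) := by
        field_simp
      rw [e]; exact div_nonneg (by linarith) (by positivity)
    have hcm : 0 ≤ -(F i) / (2 * h) + S i / (2 * h ^ 2) := by
      have e : -(F i) / (2 * h) + S i / (2 * h ^ 2) = (S i - h * F i) / (2 * h ^ 2) := by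
        field_simp; ring
      rw [e]; exact div_nonneg (by linarith) (by positivity)
    have h1 : P i * (τ * (F i / (2 * h) + S i / (2 * h ^ 2))) ≤ 0 :=
      mul_nonpos_of_nonpos_of_nonneg (hP i) (mul_nonneg hτ0.le hcp)
    have h2' : M i * (τ * (-(F i) / (2 * h) + S i / (2 * h ^ 2))) ≤ 0 :=
      mul_nonpos_of_nonpos_of_nonneg (hM i) (mul_nonneg hτ0.le hcm)
    have hid : τ * ((P i - M i) / (2 * h) * F i) + τ / 2 * (S i * ((P i - 2 * z + M i) / h ^ 2))
        = P i * (τ * (F i / (2 * h) + S i / (2 * h ^ 2)))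
          + M i * (τ * (-(F i) / (2 * h) + S i / (2 * h ^ 2)))
          + (-z) * (τ / h ^ 2 * S i) := by
      field_simp; ring
    linarith
  have hsum := Finset.sum_le_sum per
  have e2 : ∑ i : Fin d, (-z) * (τ / h ^ 2 * S i) = (-z) * (τ / h ^ 2 * ∑ i, S i) := by
    rw [Finset.mul_sum, Finset.mul_sum]
  have hfac : τ / h ^ 2 * ∑ i, S i ≤ 1 := by
    have hmul := mul_le_mul_of_nonneg_left hSsum (le_of_lt (div_pos hτ0 h2))
    have e3 : τ / h ^ 2 * (h ^ 2 / τ) = 1 := by field_simp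
    linarith
  have hzz : (-z) * (τ / h ^ 2 * ∑ i, S i) ≤ (-z) * 1 :=
    mul_le_mul_of_nonneg_left hfac (by linarith)
  have e4 : (-z) * 1 = -z := mul_one _
  linarith

lemma core2 {d : ℕ} (τ h : ℝ) (hτ0 : 0 < τ) (hh0 : 0 < h)
    (S F Wp Wm Vp Vm : Fin d → ℝ) (wx vx cc : ℝ)
    (hF : ∀ i, h * |F i| ≤ S i)
    (hSsum : ∑ i, S i ≤ h ^ 2 / τ)
    (hz : wx ≤ vx) (hP : ∀ i, Wp i ≤ Vp i) (hM : ∀ i, Wm i ≤ Vm i) :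
    wx + τ * (cc + ∑ i, (Wp i - Wm i) / (2 * h) * F i)
      + τ / 2 * ∑ i, S i * ((Wp i - 2 * wx + Wm i) / h ^ 2)
    ≤ vx + τ * (cc + ∑ i, (Vp i - Vm i) / (2 * h) * F i)
      + τ / 2 * ∑ i, S i * ((Vp i - 2 * vx + Vm i) / h ^ 2) := by
  have hc := core_ineq τ h hτ0 hh0 S F (fun i => Wp i - Vp i) (fun i => Wm i - Vm i)
      (wx - vx) hF hSsum (by linarith) (fun i => sub_nonpos.mpr (hP i))
      (fun i => sub_nonpos.mpr (hM i))
  have d1 : ∑ i, (Wp i - Vp i - (Wm i - Vm i)) / (2 * h) * F i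
      = ∑ i, (Wp i - Wm i) / (2 * h) * F i - ∑ i, (Vp i - Vm i) / (2 * h) * F i := by
    rw [← Finset.sum_sub_distrib]; exact Finset.sum_congr rfl fun i _ => by ring
  have d2 : ∑ i, S i * ((Wp i - Vp i - 2 * (wx - vx) + (Wm i - Vm i)) / h ^ 2)
      = ∑ i, S i * ((Wp i - 2 * wx + Wm i) / h ^ 2)
        - ∑ i, S i * ((Vp i - 2 * vx + Vm i) / h ^ 2) := by
    rw [← Finset.sum_sub_distrib]; exact Finset.sum_congr rfl fun i _ => by ring
  rw [d1, d2] at hc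
  have g1 : τ * (cc + ∑ i, (Wp i - Wm i) / (2 * h) * F i)
      = τ * cc + τ * ∑ i, (Wp i - Wm i) / (2 * h) * F i := by ring
  have g2 : τ * (cc + ∑ i, (Vp i - Vm i) / (2 * h) * F i)
      = τ * cc + τ * ∑ i, (Vp i - Vm i) / (2 * h) * F i := by ring
  have g3 : τ * (∑ i, (Wp i - Wm i) / (2 * h) * F i - ∑ i, (Vp i - Vm i) / (2 * h) * F i)
      = τ * ∑ i, (Wp i - Wm i) / (2 * h) * F i - τ * ∑ i, (Vp i - Vm i) / (2 * h) * F i := by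
    ring
  have g4 : τ / 2 * (∑ i, S i * ((Wp i - 2 * wx + Wm i) / h ^ 2)
        - ∑ i, S i * ((Vp i - 2 * vx + Vm i) / h ^ 2))
      = τ / 2 * ∑ i, S i * ((Wp i - 2 * wx + Wm i) / h ^ 2)
        - τ / 2 * ∑ i, S i * ((Vp i - 2 * vx + Vm i) / h ^ 2) := by ring
  linarith

lemma lrun_abs_le {d m₁ m₂ : ℕ}
    (c : ℝ → (Fin d → ℝ) → (Fin m₁ → ℝ) → (Fin m₂ → ℝ) → ℝ)
    (f : ℝ → (Fin d → ℝ) → (Fin m₁ → ℝ) → (Fin m₂ → ℝ) → Fin d → ℝ)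
    (t : ℝ) (x p : Fin d → ℝ) (a : Fin m₁ → ℝ) (b : Fin m₂ → ℝ) (Mc Mf : ℝ)
    (hMc : |c t x a b| ≤ Mc) (hfi : ∀ i, |f t x a b i| ≤ Mf) :
    |Lrun c f t x p a b| ≤ Mc + (∑ i, |p i|) * Mf := by
  unfold Lrun
  calc |c t x a b + ∑ i, p i * f t x a b i|
      ≤ |c t x a b| + |∑ i, p i * f t x a b i| := abs_add_le _ _
    _ ≤ Mc + ∑ i, |p i * f t x a b i| :=
        add_le_add hMc (Finset.abs_sum_le_sum_abs _ _)
    _ ≤ Mc + ∑ i, |p i| * Mf := by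
        gcongr with i
        rw [abs_mul]
        exact mul_le_mul_of_nonneg_left (hfi i) (abs_nonneg _)
    _ = Mc + (∑ i, |p i|) * Mf := by rw [Finset.sum_mul]

lemma ham_mono {d m₁ m₂ : ℕ} {A : Set (Fin m₁ → ℝ)} {B : Set (Fin m₂ → ℝ)}
    (hAne : A.Nonempty) (hBne : B.Nonempty)
    (c : ℝ → (Fin d → ℝ) → (Fin m₁ → ℝ) → (Fin m₂ → ℝ) → ℝ)
    (f : ℝ → (Fin d → ℝ) → (Fin m₁ → ℝ) → (Fin m₂ → ℝ) → Fin d → ℝ)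
    (t : ℝ) (x p q : Fin d → ℝ) (Mc Mf : ℝ)
    (hMc : ∀ a b, |c t x a b| ≤ Mc) (hfi : ∀ a b i, |f t x a b i| ≤ Mf)
    (k : ℝ) (hle : ∀ a ∈ A, ∀ b ∈ B, Lrun c f t x p a b ≤ Lrun c f t x q a b + k) :
    Ham A B c f t x p ≤ Ham A B c f t x q + k := by
  obtain ⟨a0, ha0⟩ := id hAne
  have hbp : ∀ b, BddBelow ((fun a => Lrun c f t x p a b) '' A) := by
    intro b
    refine ⟨-(Mc + (∑ i, |p i|) * Mf), ?_⟩
    rintro y ⟨a, ha, rfl⟩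
    exact neg_le_of_abs_le (lrun_abs_le c f t x p a b Mc Mf (hMc a b) (hfi a b))
  have hbq : ∀ b, BddBelow ((fun a => Lrun c f t x q a b) '' A) := by
    intro b
    refine ⟨-(Mc + (∑ i, |q i|) * Mf), ?_⟩
    rintro y ⟨a, ha, rfl⟩
    exact neg_le_of_abs_le (lrun_abs_le c f t x q a b Mc Mf (hMc a b) (hfi a b))
  have hbAq : BddAbove ((fun b => sInf ((fun a => Lrun c f t x q a b) '' A)) '' B) := by
    refine ⟨Mc + (∑ i, |q i|) * Mf, ?_⟩
    rintro y ⟨b, hb, rfl⟩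
    exact (csInf_le (hbq b) ⟨a0, ha0, rfl⟩).trans
      (le_of_abs_le (lrun_abs_le c f t x q a0 b Mc Mf (hMc a0 b) (hfi a0 b)))
  unfold Ham
  apply csSup_le (hBne.image _)
  rintro y ⟨b, hb, rfl⟩
  have step1 : sInf ((fun a => Lrun c f t x p a b) '' A)
      ≤ sInf ((fun a => Lrun c f t x q a b) '' A) + k := by
    rw [← sub_le_iff_le_add]
    apply le_csInf (hAne.image _)
    rintro z ⟨a, ha, rfl⟩
    have h1 : sInf ((fun a => Lrun c f t x p a b) '' A) ≤ Lrun c f t x p a b :=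
      csInf_le (hbp b) ⟨a, ha, rfl⟩
    have h2 := hle a ha b hb
    simp only [sub_le_iff_le_add]
    linarith
  have step2 : sInf ((fun a => Lrun c f t x q a b) '' A)
      ≤ sSup ((fun b => sInf ((fun a => Lrun c f t x q a b) '' A)) '' B) :=
    le_csSup hbAq ⟨b, hb, rfl⟩
  linarith

lemma fi_bound {d m₁ m₂ : ℕ}
    (f : ℝ → (Fin d → ℝ) → (Fin m₁ → ℝ) → (Fin m₂ → ℝ) → Fin d → ℝ)
    (Mf : ℝ) (hMf : ∀ t x a b, nrm (f t x a b) ≤ Mf)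
    (t : ℝ) (x : Fin d → ℝ) (a : Fin m₁ → ℝ) (b : Fin m₂ → ℝ) (i : Fin d) :
    |f t x a b i| ≤ Mf := by
  have h1 : |f t x a b i| = Real.sqrt ((f t x a b i) ^ 2) := (Real.sqrt_sq_eq_abs _).symm
  have h2 : (f t x a b i) ^ 2 ≤ ∑ j, (f t x a b j) ^ 2 :=
    Finset.single_le_sum (f := fun j => f t x a b j ^ 2) (fun j _ => sq_nonneg _) (Finset.mem_univ i)
  calc |f t x a b i| = Real.sqrt ((f t x a b i) ^ 2) := h1
    _ ≤ Real.sqrt (∑ j, (f t x a b j) ^ 2) := Real.sqrt_le_sqrt h2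
    _ ≤ Mf := hMf t x a b
/-- discrete comparison principle, Lemma 2.1: under (N2), any bounded
subsolution lies below any bounded supersolution, both for the scheme with Hamiltonian `H`
and for the linear scheme with arbitrary fixed policies. -/
theorem discrete_comparison_principle
    {d m₁ m₂ : ℕ} (hd : 0 < d)
    {A : Set (Fin m₁ → ℝ)} {B : Set (Fin m₂ → ℝ)}
    (hA : IsCompact A) (hAne : A.Nonempty) (hB : IsCompact B) (hBne : B.Nonempty)
    (c : ℝ → (Fin d → ℝ) → (Fin m₁ → ℝ) → (Fin m₂ → ℝ) → ℝ)
    (f : ℝ → (Fin d → ℝ) → (Fin m₁ → ℝ) → (Fin m₂ → ℝ) → Fin d → ℝ)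
    (hc_cont : Continuous fun q : ℝ × (Fin d → ℝ) × (Fin m₁ → ℝ) × (Fin m₂ → ℝ) =>
      c q.1 q.2.1 q.2.2.1 q.2.2.2)
    (hf_cont : Continuous fun q : ℝ × (Fin d → ℝ) × (Fin m₁ → ℝ) × (Fin m₂ → ℝ) =>
      f q.1 q.2.1 q.2.2.1 q.2.2.2)
    (Mc Mf Mg : ℝ)
    (hMc : ∀ t x a b, |c t x a b| ≤ Mc)
    (hMf : ∀ t x a b, nrm (f t x a b) ≤ Mf)
    (Sg : Fin d → ℝ → (Fin d → ℝ) → ℝ)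
    (hSg_nonneg : ∀ i t x, 0 ≤ Sg i t x)
    (MS : ℝ) (hMS : ∀ i t x, Sg i t x ≤ MS)
    (g : (Fin d → ℝ) → ℝ) (hMg : ∀ x, |g x| ≤ Mg)
    (T τ h ν : ℝ) (hT : 0 < T)
    (hτ : τ ∈ Set.Ioo (0:ℝ) 1) (hh : h ∈ Set.Ioo (0:ℝ) 1)
    (hTτ : ∃ N : ℕ, T = N * τ) (hν : 0 ≤ ν)
    (hN2a : ∀ i t x a b, h * |f t x a b i| ≤ ν + Sg i t x)
    (hN2b : ∀ t x, (d : ℝ) * ν + ∑ i, Sg i t x ≤ h ^ 2 / τ)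
    :
    (∀ V W : ℝ → (Fin d → ℝ) → ℝ,
      (∃ M : ℝ, ∀ t x, timeGrid τ T t → spaceGrid h x → |V t x| ≤ M) →
      (∃ M : ℝ, ∀ t x, timeGrid τ T t → spaceGrid h x → |W t x| ≤ M) →
      (∀ t x, timeGrid τ T t → τ ≤ t → spaceGrid h x →
        dtT τ V t x + Ham A B c f t x (cgrad h (V t) x)
          ≤ -(1/2) * ∑ i, (Sg i t x + ν) * lap1 h (V t) x i) →
      (∀ x, spaceGrid h x → g x ≤ V T x) →
      (∀ t x, timeGrid τ T t → τ ≤ t → spaceGrid h x →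
        -(1/2) * ∑ i, (Sg i t x + ν) * lap1 h (W t) x i
          ≤ dtT τ W t x + Ham A B c f t x (cgrad h (W t) x)) →
      (∀ x, spaceGrid h x → W T x ≤ g x) →
      ∀ t x, timeGrid τ T t → spaceGrid h x → W t x ≤ V t x)
    ∧
    (∀ (α : ℝ → (Fin d → ℝ) → (Fin m₁ → ℝ)) (β : ℝ → (Fin d → ℝ) → (Fin m₂ → ℝ)),
      (∀ t x, α t x ∈ A) → (∀ t x, β t x ∈ B) →
      ∀ V W : ℝ → (Fin d → ℝ) → ℝ,
      (∃ M : ℝ, ∀ t x, timeGrid τ T t → spaceGrid h x → |V t x| ≤ M) →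
      (∃ M : ℝ, ∀ t x, timeGrid τ T t → spaceGrid h x → |W t x| ≤ M) →
      (∀ t x, timeGrid τ T t → τ ≤ t → spaceGrid h x →
        dtT τ V t x + Lrun c f t x (cgrad h (V t) x) (α t x) (β t x)
          ≤ -(1/2) * ∑ i, (Sg i t x + ν) * lap1 h (V t) x i) →
      (∀ x, spaceGrid h x → g x ≤ V T x) →
      (∀ t x, timeGrid τ T t → τ ≤ t → spaceGrid h x →
        -(1/2) * ∑ i, (Sg i t x + ν) * lap1 h (W t) x i
          ≤ dtT τ W t x + Lrun c f t x (cgrad h (W t) x) (α t x) (β t x)) →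
      (∀ x, spaceGrid h x → W T x ≤ g x) →
      ∀ t x, timeGrid τ T t → spaceGrid h x → W t x ≤ V t x) := by
  have hτ0 : 0 < τ := hτ.1
  have hh0 : 0 < h := hh.1
  obtain ⟨N, hTN⟩ := hTτ
  -- generic comparison for an abstract Hamiltonian `Hh` which is monotone w.r.t. `Lrun`
  have generic : ∀ (Hh : ℝ → (Fin d → ℝ) → (Fin d → ℝ) → ℝ),
      (∀ t x (p q : Fin d → ℝ) (k : ℝ),
          (∀ a b, Lrun c f t x p a b ≤ Lrun c f t x q a b + k) →
          Hh t x p ≤ Hh t x q + k) →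
      ∀ V W : ℝ → (Fin d → ℝ) → ℝ,
        (∀ t x, timeGrid τ T t → τ ≤ t → spaceGrid h x →
          dtT τ V t x + Hh t x (cgrad h (V t) x)
            ≤ -(1/2) * ∑ i, (Sg i t x + ν) * lap1 h (V t) x i) →
        (∀ x, spaceGrid h x → g x ≤ V T x) →
        (∀ t x, timeGrid τ T t → τ ≤ t → spaceGrid h x →
          -(1/2) * ∑ i, (Sg i t x + ν) * lap1 h (W t) x i
            ≤ dtT τ W t x + Hh t x (cgrad h (W t) x)) →
        (∀ x, spaceGrid h x → W T x ≤ g x) →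
        ∀ t x, timeGrid τ T t → spaceGrid h x → W t x ≤ V t x := by
    intro Hh Hmono V W hVs hVT hWs hWT
    have key : ∀ j k : ℕ, k + j = N → ∀ x, spaceGrid h x →
        W ((k : ℝ) * τ) x ≤ V ((k : ℝ) * τ) x := by
      intro j
      induction j with
      | zero =>
        intro k hk x hx
        have hkN : k = N := by omega
        subst hkN
        rw [← hTN]
        exact le_trans (hWT x hx) (hVT x hx)
      | succ j ih =>
        intro k hk x hx
        have ihk : ∀ y, spaceGrid h y →
            W (((k + 1 : ℕ) : ℝ) * τ) y ≤ V (((k + 1 : ℕ) : ℝ) * τ) y :=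
          ih (k + 1) (by omega)
        set s : ℝ := ((k + 1 : ℕ) : ℝ) * τ with hs
        have hk1N : k + 1 ≤ N := by omega
        have hsT : s ≤ T := by
          rw [hTN, hs]
          have hcast : ((k + 1 : ℕ) : ℝ) ≤ (N : ℝ) := by exact_mod_cast hk1N
          nlinarith
        have hts : timeGrid τ T s := ⟨⟨k + 1, hs⟩, hsT⟩
        have hτs : τ ≤ s := by
          have hcast : (1 : ℝ) ≤ ((k + 1 : ℕ) : ℝ) := by
            exact_mod_cast Nat.one_le_iff_ne_zero.2 (Nat.succ_ne_zero k)
          nlinarith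
        have hst : s - τ = (k : ℝ) * τ := by rw [hs]; push_cast; ring
        -- grid points of the neighbours
        have hgp : ∀ i : Fin d, spaceGrid h (Function.update x i (x i + h)) := by
          intro i j
          rcases hx j with ⟨z, hz⟩
          by_cases hji : j = i
          · subst hji
            rw [Function.update_self]
            exact ⟨z + 1, by rw [hz]; push_cast; ring⟩
          · rw [Function.update_of_ne hji]
            exact ⟨z, hz⟩
        have hgm : ∀ i : Fin d, spaceGrid h (Function.update x i (x i - h)) := by
          intro i j
          rcases hx j with ⟨z, hz⟩
          by_cases hji : j = i
          · subst hji
            rw [Function.update_self]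
            exact ⟨z - 1, by rw [hz]; push_cast; ring⟩
          · rw [Function.update_of_ne hji]
            exact ⟨z, hz⟩
        have hV := hVs s x hts hτs hx
        have hW := hWs s x hts hτs hx
        simp only [dtT] at hV hW
        -- one-sided scheme inequalities after multiplying by τ
        have hV' : V s x + τ * Hh s x (cgrad h (V s) x)
            + τ / 2 * ∑ i, (Sg i s x + ν) * lap1 h (V s) x i ≤ V (s - τ) x := by
          have h3 : (V s x - V (s - τ) x) / τ
              ≤ -(Hh s x (cgrad h (V s) x))
                - (1/2) * ∑ i, (Sg i s x + ν) * lap1 h (V s) x i := by linarith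
          have h4 := (div_le_iff₀ hτ0).1 h3
          have h5 : (-(Hh s x (cgrad h (V s) x))
                - (1/2) * ∑ i, (Sg i s x + ν) * lap1 h (V s) x i) * τ
              = -(τ * Hh s x (cgrad h (V s) x))
                - τ / 2 * ∑ i, (Sg i s x + ν) * lap1 h (V s) x i := by ring
          linarith
        have hW' : W (s - τ) x ≤ W s x + τ * Hh s x (cgrad h (W s) x)
            + τ / 2 * ∑ i, (Sg i s x + ν) * lap1 h (W s) x i := by
          have h3 : -(Hh s x (cgrad h (W s) x))
                - (1/2) * ∑ i, (Sg i s x + ν) * lap1 h (W s) x i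
              ≤ (W s x - W (s - τ) x) / τ := by linarith
          have h4 := (le_div_iff₀ hτ0).1 h3
          have h5 : (-(Hh s x (cgrad h (W s) x))
                - (1/2) * ∑ i, (Sg i s x + ν) * lap1 h (W s) x i) * τ
              = -(τ * Hh s x (cgrad h (W s) x))
                - τ / 2 * ∑ i, (Sg i s x + ν) * lap1 h (W s) x i := by ring
          linarith
        -- monotonicity of the Hamiltonian step
        have hham : Hh s x (cgrad h (W s) x) ≤ Hh s x (cgrad h (V s) x)
            + (V s x - W s x
                + τ / 2 * ((∑ i, (Sg i s x + ν) * lap1 h (V s) x i)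
                  - ∑ i, (Sg i s x + ν) * lap1 h (W s) x i)) / τ := by
          apply Hmono
          intro a b
          have hcore := core2 (d := d) τ h hτ0 hh0
            (fun i => Sg i s x + ν) (fun i => f s x a b i)
            (fun i => W s (Function.update x i (x i + h)))
            (fun i => W s (Function.update x i (x i - h)))
            (fun i => V s (Function.update x i (x i + h)))
            (fun i => V s (Function.update x i (x i - h)))
            (W s x) (V s x) (c s x a b)
            (fun i => by
              show h * |f s x a b i| ≤ Sg i s x + ν
              linarith [hN2a i s x a b])
            (by
              have hb := hN2b s x
              have e : ∑ i, (Sg i s x + ν) = (∑ i, Sg i s x) + (d : ℝ) * ν := by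
                rw [Finset.sum_add_distrib, Finset.sum_const, Finset.card_univ,
                  Fintype.card_fin, nsmul_eq_mul]
              rw [e]; linarith)
            (ihk x hx) (fun i => ihk _ (hgp i)) (fun i => ihk _ (hgm i))
          simp only [Lrun, cgrad, lap1]
          rw [← sub_le_iff_le_add', le_div_iff₀ hτ0]
          set X := c s x a b + ∑ i, (W s (Function.update x i (x i + h))
              - W s (Function.update x i (x i - h))) / (2 * h) * f s x a b i with hX
          set Y := c s x a b + ∑ i, (V s (Function.update x i (x i + h))
              - V s (Function.update x i (x i - h))) / (2 * h) * f s x a b i with hY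
          set SW2 := ∑ i, (Sg i s x + ν) * ((W s (Function.update x i (x i + h))
              - 2 * W s x + W s (Function.update x i (x i - h))) / h ^ 2) with hSW2
          set SV2 := ∑ i, (Sg i s x + ν) * ((V s (Function.update x i (x i + h))
              - 2 * V s x + V s (Function.update x i (x i - h))) / h ^ 2) with hSV2
          have e1 : (X - Y) * τ = τ * X - τ * Y := by ring
          have e2 : τ / 2 * (SV2 - SW2) = τ / 2 * SV2 - τ / 2 * SW2 := by ring
          linarith
        have hmul := mul_le_mul_of_nonneg_left hham hτ0.le
        have e3 : τ * (Hh s x (cgrad h (V s) x)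
              + (V s x - W s x
                + τ / 2 * ((∑ i, (Sg i s x + ν) * lap1 h (V s) x i)
                  - ∑ i, (Sg i s x + ν) * lap1 h (W s) x i)) / τ)
            = τ * Hh s x (cgrad h (V s) x) + V s x - W s x
              + τ / 2 * ∑ i, (Sg i s x + ν) * lap1 h (V s) x i
              - τ / 2 * ∑ i, (Sg i s x + ν) * lap1 h (W s) x i := by
          field_simp
          ring
        rw [← hst]
        linarith
    intro t x ht hx
    obtain ⟨⟨k, hkt⟩, htT⟩ := ht
    have hkN : k ≤ N := by
      by_contra hc
      push_neg at hc
      have h1 : (N : ℝ) < (k : ℝ) := by exact_mod_cast hc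
      rw [hkt, hTN] at htT
      nlinarith
    rw [hkt]
    exact key (N - k) k (by omega) x hx
  constructor
  · intro V W _ _ hVs hVT hWs hWT
    exact generic (Ham A B c f)
      (fun t x p q k hle =>
        ham_mono hAne hBne c f t x p q Mc Mf (fun a b => hMc t x a b)
          (fun a b i => fi_bound f Mf hMf t x a b i) k (fun a _ b _ => hle a b))
      V W hVs hVT hWs hWT
  · intro α β hα hβ V W _ _ hVs hVT hWs hWT
    exact generic (fun t x p => Lrun c f t x p (α t x) (β t x))
      (fun t x p q k hle => hle (α t x) (β t x))
      V W hVs hVT hWs hWT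
end
end

section
/- Uniform boundedness of the discrete solutions: Assume condition (N2). Then the solution V^{τ,h} of the scheme (4.2) and, for every n ≥ 0, the policy-iteration solutions V_n^{τ,h} of the schemes (4.1)–(4.1') satisfy, for all (t,x) ∈ Ω^{τ,h}_T, |V^{τ,h}(t,x)| ≤ ‖g‖_∞ + ‖c‖_∞(T−t) and |V_n^{τ,h}(t,x)| ≤ ‖g‖_∞ + ‖c‖_∞(T−t); in particular all of them are bounded by ‖g‖_∞ + ‖c‖_∞T. -/
open scoped BigOperators

noncomputable section

-- HELPERS

lemma gridUpdAdd {d : ℕ} {h : ℝ} {x : Fin d → ℝ} (hx : ∀ i, ∃ z : ℤ, x i = z * h) (i : Fin d) :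
    ∀ j, ∃ z : ℤ, (Function.update x i (x i + h)) j = z * h := by
  intro j
  rcases eq_or_ne j i with rfl | hji
  · obtain ⟨z, hz⟩ := hx j
    exact ⟨z + 1, by simp [Function.update, hz]; push_cast; ring⟩
  · simpa [Function.update, hji] using hx j

lemma gridUpdSub {d : ℕ} {h : ℝ} {x : Fin d → ℝ} (hx : ∀ i, ∃ z : ℤ, x i = z * h) (i : Fin d) :
    ∀ j, ∃ z : ℤ, (Function.update x i (x i - h)) j = z * h := by
  intro j
  rcases eq_or_ne j i with rfl | hji
  · obtain ⟨z, hz⟩ := hx j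
    exact ⟨z - 1, by simp [Function.update, hz]; push_cast; ring⟩
  · simpa [Function.update, hji] using hx j

lemma onestep {d : ℕ} (τ h Mc K ν : ℝ) (hτ0 : 0 < τ) (hh0 : 0 < h) (hν : 0 ≤ ν)
    (s F : Fin d → ℝ) (hs : ∀ i, 0 ≤ s i)
    (hF : ∀ i, h * |F i| ≤ ν + s i)
    (hsum : (d : ℝ) * ν + ∑ i, s i ≤ h ^ 2 / τ)
    (cc u : ℝ) (up um : Fin d → ℝ)
    (hcc : |cc| ≤ Mc) (hu : |u| ≤ K)
    (hup : ∀ i, |up i| ≤ K) (hum : ∀ i, |um i| ≤ K) :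
    |u + τ * ((cc + ∑ i, (up i - um i) / (2 * h) * F i)
        + 1 / 2 * ∑ i, (s i + ν) * ((up i - 2 * u + um i) / h ^ 2))| ≤ K + τ * Mc := by
  have hK : 0 ≤ K := (abs_nonneg u).trans hu
  have hwp0 : ∀ i, 0 ≤ τ * (F i / (2 * h) + (s i + ν) / (2 * h ^ 2)) := by
    intro i
    apply mul_nonneg hτ0.le
    have h1 : -(ν + s i) ≤ h * F i := by
      have := hF i; have := neg_abs_le (F i)
      nlinarith
    have e : F i / (2 * h) + (s i + ν) / (2 * h ^ 2) = (h * F i + (s i + ν)) / (2 * h ^ 2) := by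
      field_simp
    rw [e]
    apply div_nonneg (by linarith) (by positivity)
  have hwm0 : ∀ i, 0 ≤ τ * (-(F i) / (2 * h) + (s i + ν) / (2 * h ^ 2)) := by
    intro i
    apply mul_nonneg hτ0.le
    have h1 : h * F i ≤ ν + s i := by
      have := hF i; have := le_abs_self (F i)
      nlinarith
    have e : -(F i) / (2 * h) + (s i + ν) / (2 * h ^ 2) = ((s i + ν) - h * F i) / (2 * h ^ 2) := by
      field_simp; ring
    rw [e]
    apply div_nonneg (by linarith) (by positivity)
  have hWsum : ∀ i, τ * (F i / (2 * h) + (s i + ν) / (2 * h ^ 2))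
      + τ * (-(F i) / (2 * h) + (s i + ν) / (2 * h ^ 2)) = τ * (s i + ν) / h ^ 2 := by
    intro i; field_simp; ring
  have hW1 : ∑ i, τ * (s i + ν) / h ^ 2 ≤ 1 := by
    have e : ∑ i, τ * (s i + ν) / h ^ 2 = ((d : ℝ) * ν + ∑ i, s i) * (τ / h ^ 2) := by
      rw [add_mul, Finset.sum_mul]
      rw [show ∑ i, τ * (s i + ν) / h ^ 2 = ∑ i : Fin d, (s i * (τ / h ^ 2) + ν * (τ / h ^ 2)) from
        Finset.sum_congr rfl fun i _ => by field_simp]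
      rw [Finset.sum_add_distrib, Finset.sum_const, Finset.card_fin]
      push_cast
      ring
    rw [e]
    have h2 := mul_le_mul_of_nonneg_right hsum (by positivity : (0:ℝ) ≤ τ / h ^ 2)
    have h3 : h ^ 2 / τ * (τ / h ^ 2) = 1 := by field_simp
    linarith
  have hW0 : 0 ≤ ∑ i, τ * (s i + ν) / h ^ 2 := by
    apply Finset.sum_nonneg; intro i _
    exact div_nonneg (mul_nonneg hτ0.le (by linarith [hs i])) (by positivity)
  have hterm : ∀ i : Fin d, τ * ((up i - um i) / (2 * h) * F i)
        + τ * (1 / 2) * ((s i + ν) * ((up i - 2 * u + um i) / h ^ 2))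
      = (τ * (F i / (2 * h) + (s i + ν) / (2 * h ^ 2)) * up i
        + τ * (-(F i) / (2 * h) + (s i + ν) / (2 * h ^ 2)) * um i)
        - (τ * (s i + ν) / h ^ 2) * u := by
    intro i; field_simp; ring
  have hrw : u + τ * ((cc + ∑ i, (up i - um i) / (2 * h) * F i)
        + 1 / 2 * ∑ i, (s i + ν) * ((up i - 2 * u + um i) / h ^ 2))
      = τ * cc + (1 - ∑ i, τ * (s i + ν) / h ^ 2) * u
        + ∑ i, (τ * (F i / (2 * h) + (s i + ν) / (2 * h ^ 2)) * up i
            + τ * (-(F i) / (2 * h) + (s i + ν) / (2 * h ^ 2)) * um i) := by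
    have e1 : ∑ i, (τ * ((up i - um i) / (2 * h) * F i)
          + τ * (1 / 2) * ((s i + ν) * ((up i - 2 * u + um i) / h ^ 2)))
        = ∑ i, ((τ * (F i / (2 * h) + (s i + ν) / (2 * h ^ 2)) * up i
            + τ * (-(F i) / (2 * h) + (s i + ν) / (2 * h ^ 2)) * um i)
            - (τ * (s i + ν) / h ^ 2) * u) :=
      Finset.sum_congr rfl fun i _ => hterm i
    rw [Finset.sum_sub_distrib, ← Finset.sum_mul] at e1
    rw [Finset.sum_add_distrib, ← Finset.mul_sum, ← Finset.mul_sum] at e1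
    -- e1 : τ * Σ1 + (τ*(1/2)) * Σ2 = Σ3 - (ΣW) * u
    linarith [e1]
  rw [hrw]
  have hS3 : |∑ i, (τ * (F i / (2 * h) + (s i + ν) / (2 * h ^ 2)) * up i
      + τ * (-(F i) / (2 * h) + (s i + ν) / (2 * h ^ 2)) * um i)|
      ≤ (∑ i, τ * (s i + ν) / h ^ 2) * K := by
    calc |∑ i, (τ * (F i / (2 * h) + (s i + ν) / (2 * h ^ 2)) * up i
        + τ * (-(F i) / (2 * h) + (s i + ν) / (2 * h ^ 2)) * um i)|
        ≤ ∑ i, |τ * (F i / (2 * h) + (s i + ν) / (2 * h ^ 2)) * up i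
        + τ * (-(F i) / (2 * h) + (s i + ν) / (2 * h ^ 2)) * um i| :=
          Finset.abs_sum_le_sum_abs _ _
      _ ≤ ∑ i, τ * (s i + ν) / h ^ 2 * K := by
          apply Finset.sum_le_sum
          intro i _
          calc |τ * (F i / (2 * h) + (s i + ν) / (2 * h ^ 2)) * up i
              + τ * (-(F i) / (2 * h) + (s i + ν) / (2 * h ^ 2)) * um i|
              ≤ |τ * (F i / (2 * h) + (s i + ν) / (2 * h ^ 2)) * up i|
              + |τ * (-(F i) / (2 * h) + (s i + ν) / (2 * h ^ 2)) * um i| := abs_add_le _ _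
            _ = τ * (F i / (2 * h) + (s i + ν) / (2 * h ^ 2)) * |up i|
              + τ * (-(F i) / (2 * h) + (s i + ν) / (2 * h ^ 2)) * |um i| := by
                rw [abs_mul, abs_of_nonneg (hwp0 i), abs_mul, abs_of_nonneg (hwm0 i)]
            _ ≤ τ * (F i / (2 * h) + (s i + ν) / (2 * h ^ 2)) * K
              + τ * (-(F i) / (2 * h) + (s i + ν) / (2 * h ^ 2)) * K := by
                have := mul_le_mul_of_nonneg_left (hup i) (hwp0 i)
                have := mul_le_mul_of_nonneg_left (hum i) (hwm0 i)
                linarith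
            _ = τ * (s i + ν) / h ^ 2 * K := by rw [← hWsum i]; ring
      _ = (∑ i, τ * (s i + ν) / h ^ 2) * K := by rw [Finset.sum_mul]
  have h1 : |τ * cc| ≤ τ * Mc := by
    rw [abs_mul, abs_of_nonneg hτ0.le]
    exact mul_le_mul_of_nonneg_left hcc hτ0.le
  have h2 : |(1 - ∑ i, τ * (s i + ν) / h ^ 2) * u| ≤ (1 - ∑ i, τ * (s i + ν) / h ^ 2) * K := by
    rw [abs_mul, abs_of_nonneg (by linarith : (0:ℝ) ≤ 1 - ∑ i, τ * (s i + ν) / h ^ 2)]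
    exact mul_le_mul_of_nonneg_left hu (by linarith)
  calc |τ * cc + (1 - ∑ i, τ * (s i + ν) / h ^ 2) * u
      + ∑ i, (τ * (F i / (2 * h) + (s i + ν) / (2 * h ^ 2)) * up i
          + τ * (-(F i) / (2 * h) + (s i + ν) / (2 * h ^ 2)) * um i)|
      ≤ |τ * cc + (1 - ∑ i, τ * (s i + ν) / h ^ 2) * u|
      + |∑ i, (τ * (F i / (2 * h) + (s i + ν) / (2 * h ^ 2)) * up i
          + τ * (-(F i) / (2 * h) + (s i + ν) / (2 * h ^ 2)) * um i)| := abs_add_le _ _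
    _ ≤ (|τ * cc| + |(1 - ∑ i, τ * (s i + ν) / h ^ 2) * u|)
      + (∑ i, τ * (s i + ν) / h ^ 2) * K := by
        have := abs_add_le (τ * cc) ((1 - ∑ i, τ * (s i + ν) / h ^ 2) * u)
        linarith
    _ ≤ K + τ * Mc := by nlinarith [mul_le_mul_of_nonneg_right hW1 hK]

lemma ham_bound {m₁ m₂ : ℕ} {A : Set (Fin m₁ → ℝ)} {B : Set (Fin m₂ → ℝ)}
    (hAne : A.Nonempty) (hBne : B.Nonempty)
    (L : (Fin m₁ → ℝ) → (Fin m₂ → ℝ) → ℝ) (u D τ M : ℝ) (hτ0 : 0 < τ)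
    (hL : ∀ a ∈ A, ∀ b ∈ B, |u + τ * (L a b + D)| ≤ M) :
    |u + τ * (sSup ((fun b => sInf ((fun a => L a b) '' A)) '' B) + D)| ≤ M := by
  have hbounds : ∀ a ∈ A, ∀ b ∈ B,
      (-M - u) / τ - D ≤ L a b ∧ L a b ≤ (M - u) / τ - D := by
    intro a ha b hb
    have h1 := abs_le.mp (hL a ha b hb)
    constructor
    · rw [sub_le_iff_le_add, div_le_iff₀ hτ0]
      nlinarith [h1.1]
    · rw [le_sub_iff_add_le, le_div_iff₀ hτ0]
      nlinarith [h1.2]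
  have hInf : ∀ b ∈ B, (-M - u) / τ - D ≤ sInf ((fun a => L a b) '' A)
      ∧ sInf ((fun a => L a b) '' A) ≤ (M - u) / τ - D := by
    intro b hb
    constructor
    · apply le_csInf (hAne.image _)
      rintro y ⟨a, ha, rfl⟩
      exact (hbounds a ha b hb).1
    · obtain ⟨a, ha⟩ := hAne
      refine le_trans (csInf_le ⟨(-M - u) / τ - D, ?_⟩ ⟨a, ha, rfl⟩) (hbounds a ha b hb).2
      rintro y ⟨a', ha', rfl⟩
      exact (hbounds a' ha' b hb).1
  have hSup_le : sSup ((fun b => sInf ((fun a => L a b) '' A)) '' B) ≤ (M - u) / τ - D := by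
    apply csSup_le (hBne.image _)
    rintro y ⟨b, hb, rfl⟩
    exact (hInf b hb).2
  have hlo_le : (-M - u) / τ - D ≤ sSup ((fun b => sInf ((fun a => L a b) '' A)) '' B) := by
    obtain ⟨b, hb⟩ := hBne
    refine le_trans (hInf b hb).1 (le_csSup ⟨(M - u) / τ - D, ?_⟩ ⟨b, hb, rfl⟩)
    rintro y ⟨b', hb', rfl⟩
    exact (hInf b' hb').2
  rw [abs_le]
  have e1 : τ * (((-M - u) / τ - D) + D) = -M - u := by field_simp; ring
  have e2 : τ * (((M - u) / τ - D) + D) = M - u := by field_simp; ring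
  constructor
  · nlinarith [mul_le_mul_of_nonneg_left (by linarith [hlo_le] :
      ((-M - u) / τ - D) + D ≤ sSup ((fun b => sInf ((fun a => L a b) '' A)) '' B) + D) hτ0.le]
  · nlinarith [mul_le_mul_of_nonneg_left (by linarith [hSup_le] :
      sSup ((fun b => sInf ((fun a => L a b) '' A)) '' B) + D ≤ ((M - u) / τ - D) + D) hτ0.le]

/-- uniform boundedness of the discrete solutions: under (N2), the solution
`V` of scheme (4.2) and all policy-iteration solutions `Vn n` of (4.1)–(4.1') are bounded by
`‖g‖_∞ + ‖c‖_∞ (T - t)`, hence by `‖g‖_∞ + ‖c‖_∞ T`. -/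
theorem discrete_solutions_uniformly_bounded
    {d m₁ m₂ : ℕ} (hd : 0 < d)
    {A : Set (Fin m₁ → ℝ)} {B : Set (Fin m₂ → ℝ)}
    (hA : IsCompact A) (hAne : A.Nonempty) (hB : IsCompact B) (hBne : B.Nonempty)
    (c : ℝ → (Fin d → ℝ) → (Fin m₁ → ℝ) → (Fin m₂ → ℝ) → ℝ)
    (f : ℝ → (Fin d → ℝ) → (Fin m₁ → ℝ) → (Fin m₂ → ℝ) → Fin d → ℝ)
    (hc_cont : Continuous fun q : ℝ × (Fin d → ℝ) × (Fin m₁ → ℝ) × (Fin m₂ → ℝ) =>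
      c q.1 q.2.1 q.2.2.1 q.2.2.2)
    (hf_cont : Continuous fun q : ℝ × (Fin d → ℝ) × (Fin m₁ → ℝ) × (Fin m₂ → ℝ) =>
      f q.1 q.2.1 q.2.2.1 q.2.2.2)
    (Mc Mf Mg : ℝ)
    (hMc : ∀ t x a b, |c t x a b| ≤ Mc)
    (hMf : ∀ t x a b, nrm (f t x a b) ≤ Mf)
    (Sg : Fin d → ℝ → (Fin d → ℝ) → ℝ)
    (hSg_nonneg : ∀ i t x, 0 ≤ Sg i t x)
    (MS : ℝ) (hMS : ∀ i t x, Sg i t x ≤ MS)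
    (g : (Fin d → ℝ) → ℝ) (hMg : ∀ x, |g x| ≤ Mg)
    (T τ h ν : ℝ) (hT : 0 < T)
    (hτ : τ ∈ Set.Ioo (0:ℝ) 1) (hh : h ∈ Set.Ioo (0:ℝ) 1)
    (hTτ : ∃ N : ℕ, T = N * τ) (hν : 0 ≤ ν)
    (hN2a : ∀ i t x a b, h * |f t x a b i| ≤ ν + Sg i t x)
    (hN2b : ∀ t x, (d : ℝ) * ν + ∑ i, Sg i t x ≤ h ^ 2 / τ)
    (V : ℝ → (Fin d → ℝ) → ℝ)
    (hV_eq : ∀ t x, timeGrid τ T t → τ ≤ t → spaceGrid h x →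
      dtT τ V t x + Ham A B c f t x (cgrad h (V t) x)
        = -(1/2) * ∑ i, (Sg i t x + ν) * lap1 h (V t) x i)
    (hV_T : ∀ x, spaceGrid h x → V T x = g x)
    (αn : ℕ → ℝ → (Fin d → ℝ) → (Fin m₁ → ℝ))
    (βn : ℕ → ℝ → (Fin d → ℝ) → (Fin m₂ → ℝ))
    (αnb : ℕ → (Fin m₂ → ℝ) → ℝ → (Fin d → ℝ) → (Fin m₁ → ℝ))
    (hαA : ∀ n t x, αn n t x ∈ A) (hβB : ∀ n t x, βn n t x ∈ B)
    (hαbA : ∀ n b t x, αnb n b t x ∈ A)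
    (Vn : ℕ → ℝ → (Fin d → ℝ) → ℝ)
    (hVn_eq : ∀ n t x, timeGrid τ T t → τ ≤ t → spaceGrid h x →
      dtT τ (Vn n) t x
          + Lrun c f t x (cgrad h (Vn n t) x) (αn n t x) (βn n t x)
        = -(1/2) * ∑ i, (Sg i t x + ν) * lap1 h (Vn n t) x i)
    (hVn_T : ∀ n x, spaceGrid h x → Vn n T x = g x)
    (hmin : ∀ n t x, timeGrid τ T t → spaceGrid h x → ∀ b ∈ B, ∀ a ∈ A,
      Lrun c f t x (cgrad h (Vn n t) x) (αnb (n+1) b t x) b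
        ≤ Lrun c f t x (cgrad h (Vn n t) x) a b)
    (hmax : ∀ n t x, timeGrid τ T t → spaceGrid h x → ∀ b ∈ B,
      Lrun c f t x (cgrad h (Vn n t) x) (αnb (n+1) b t x) b
        ≤ Lrun c f t x (cgrad h (Vn n t) x)
            (αnb (n+1) (βn (n+1) t x) t x) (βn (n+1) t x))
    (hsel : ∀ n t x, αn (n+1) t x = αnb (n+1) (βn (n+1) t x) t x)
    :
    ∀ t x, timeGrid τ T t → spaceGrid h x →
      (|V t x| ≤ Mg + Mc * (T - t) ∧ ∀ n : ℕ, |Vn n t x| ≤ Mg + Mc * (T - t))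
      ∧ (|V t x| ≤ Mg + Mc * T ∧ ∀ n : ℕ, |Vn n t x| ≤ Mg + Mc * T) := by
  obtain ⟨a₀, ha₀⟩ := hAne
  obtain ⟨b₀, hb₀⟩ := hBne
  obtain ⟨N, hN⟩ := hTτ
  have hτ0 : 0 < τ := hτ.1
  have hh0 : 0 < h := hh.1
  have hMc0 : 0 ≤ Mc := (abs_nonneg _).trans (hMc 0 0 a₀ b₀)
  have hMg0 : 0 ≤ Mg := (abs_nonneg _).trans (hMg 0)
  have hAne' : A.Nonempty := ⟨a₀, ha₀⟩
  have hBne' : B.Nonempty := ⟨b₀, hb₀⟩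
  have key : ∀ m k : ℕ, k + m = N → ∀ x, spaceGrid h x →
      |V ((k : ℝ) * τ) x| ≤ Mg + Mc * (T - (k : ℝ) * τ) ∧
      ∀ n, |Vn n ((k : ℝ) * τ) x| ≤ Mg + Mc * (T - (k : ℝ) * τ) := by
    intro m
    induction m with
    | zero =>
      intro k hk x hx
      have hkN : k = N := by omega
      subst hkN
      rw [← hN, hV_T x hx]
      have h0 : Mc * (T - T) = 0 := by ring
      constructor
      · linarith [hMg x]
      · intro n; rw [hVn_T n x hx]; linarith [hMg x]
    | succ m ih =>
      intro k hk x hx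
      have ih' := ih (k + 1) (by omega)
      set t' : ℝ := ((k + 1 : ℕ) : ℝ) * τ with ht'def
      have hkN : ((k + 1 : ℕ) : ℝ) ≤ (N : ℝ) := by exact_mod_cast (by omega : k + 1 ≤ N)
      have ht'T : t' ≤ T := by
        rw [hN, ht'def]
        exact mul_le_mul_of_nonneg_right hkN hτ0.le
      have ht'grid : timeGrid τ T t' := ⟨⟨k + 1, rfl⟩, ht'T⟩
      have hτt' : τ ≤ t' := by
        rw [ht'def]
        have h1 : (1 : ℝ) ≤ ((k + 1 : ℕ) : ℝ) := by exact_mod_cast Nat.one_le_iff_ne_zero.mpr (by omega)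
        nlinarith
      have ht'sub : t' - τ = (k : ℝ) * τ := by rw [ht'def]; push_cast; ring
      set K : ℝ := Mg + Mc * (T - t') with hKdef
      have hgoal : K + τ * Mc = Mg + Mc * (T - (k : ℝ) * τ) := by
        rw [hKdef, ht'def]; push_cast; ring
      have hup_grid : ∀ i : Fin d, spaceGrid h (Function.update x i (x i + h)) :=
        fun i => gridUpdAdd hx i
      have hum_grid : ∀ i : Fin d, spaceGrid h (Function.update x i (x i - h)) :=
        fun i => gridUpdSub hx i
      constructor
      · -- the Isaacs scheme solution V
        have e := hV_eq t' x ht'grid hτt' hx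
        simp only [dtT, ht'sub] at e
        have e'' : (V t' x - V ((k : ℝ) * τ) x) / τ
            = -(Ham A B c f t' x (cgrad h (V t') x))
              - 1 / 2 * ∑ i, (Sg i t' x + ν) * lap1 h (V t') x i := by linarith
        have e3 := (div_eq_iff hτ0.ne').mp e''
        have eV : V ((k : ℝ) * τ) x = V t' x
            + τ * (Ham A B c f t' x (cgrad h (V t') x)
              + 1 / 2 * ∑ i, (Sg i t' x + ν) * lap1 h (V t') x i) := by
          linear_combination -e3
        rw [← hgoal, eV]
        simp only [Ham]
        apply ham_bound hAne' hBne'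
          (fun a b => Lrun c f t' x (cgrad h (V t') x) a b) (V t' x)
          (1 / 2 * ∑ i, (Sg i t' x + ν) * lap1 h (V t') x i) τ (K + τ * Mc) hτ0
        intro a ha b hb
        have hstep := onestep τ h Mc K ν hτ0 hh0 hν (fun i => Sg i t' x) (f t' x a b)
          (fun i => hSg_nonneg i t' x) (fun i => hN2a i t' x a b) (hN2b t' x)
          (c t' x a b) (V t' x)
          (fun i => V t' (Function.update x i (x i + h)))
          (fun i => V t' (Function.update x i (x i - h)))
          (hMc t' x a b) (ih' x hx).1
          (fun i => (ih' _ (hup_grid i)).1)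
          (fun i => (ih' _ (hum_grid i)).1)
        simpa only [Lrun, cgrad, lap1] using hstep
      · -- the policy-iteration solutions
        intro n
        have en := hVn_eq n t' x ht'grid hτt' hx
        simp only [dtT, ht'sub] at en
        have en'' : (Vn n t' x - Vn n ((k : ℝ) * τ) x) / τ
            = -(Lrun c f t' x (cgrad h (Vn n t') x) (αn n t' x) (βn n t' x))
              - 1 / 2 * ∑ i, (Sg i t' x + ν) * lap1 h (Vn n t') x i := by linarith
        have en3 := (div_eq_iff hτ0.ne').mp en''
        have eVn : Vn n ((k : ℝ) * τ) x = Vn n t' x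
            + τ * (Lrun c f t' x (cgrad h (Vn n t') x) (αn n t' x) (βn n t' x)
              + 1 / 2 * ∑ i, (Sg i t' x + ν) * lap1 h (Vn n t') x i) := by
          linear_combination -en3
        rw [← hgoal, eVn]
        have hstep := onestep τ h Mc K ν hτ0 hh0 hν (fun i => Sg i t' x)
          (f t' x (αn n t' x) (βn n t' x))
          (fun i => hSg_nonneg i t' x) (fun i => hN2a i t' x (αn n t' x) (βn n t' x)) (hN2b t' x)
          (c t' x (αn n t' x) (βn n t' x)) (Vn n t' x)
          (fun i => Vn n t' (Function.update x i (x i + h)))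
          (fun i => Vn n t' (Function.update x i (x i - h)))
          (hMc t' x (αn n t' x) (βn n t' x)) ((ih' x hx).2 n)
          (fun i => (ih' _ (hup_grid i)).2 n)
          (fun i => (ih' _ (hum_grid i)).2 n)
        simpa only [Lrun, cgrad, lap1] using hstep
  intro t x ht hx
  obtain ⟨⟨k, hkt⟩, htT⟩ := ht
  have hkN : k ≤ N := by
    by_contra hcon
    push_neg at hcon
    have hlt : (N : ℝ) * τ < (k : ℝ) * τ := by
      apply mul_lt_mul_of_pos_right _ hτ0
      exact_mod_cast hcon
    rw [← hN, ← hkt] at hlt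
    linarith
  have hkey := key (N - k) k (by omega) x hx
  rw [← hkt] at hkey
  have ht0 : 0 ≤ t := by
    rw [hkt]
    exact mul_nonneg (Nat.cast_nonneg k) hτ0.le
  refine ⟨hkey, ?_, ?_⟩
  · calc |V t x| ≤ Mg + Mc * (T - t) := hkey.1
      _ ≤ Mg + Mc * T := by nlinarith
  · intro n
    calc |Vn n t x| ≤ Mg + Mc * (T - t) := hkey.2 n
      _ ≤ Mg + Mc * T := by nlinarith
end
end

section
/- Stability of the discrete scheme under approximate solutions (proved within Corollary 4.5): Assume condition (N2), and let V^{τ,h} be the solution of the scheme (4.2). Suppose u : ℕ^τ_T × ℤ^d_h → ℝ is bounded and there are constants E, η ≥ 0 such that |∂_t^τ u(t,x) + H(t,x, ∇^h u(t,x)) + (1/2)Σ_{i=1}^d(Σ_i(t,x)+ν_h)Δ_i^h u(t,x)| ≤ E for all (t,x) ∈ Ω^{τ,h}_T with t ≥ τ, and |u(T,x) − g(x)| ≤ η for all x ∈ ℤ^d_h. Then sup_{(t,x) ∈ Ω^{τ,h}_T} |u(t,x) − V^{τ,h}(t,x)| ≤ T·E + η. -/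
open scoped BigOperators

noncomputable section

lemma per_coord (τ h σ F K w0 wp wm : ℝ) (hτ : 0 < τ) (hh : 0 < h) (hσ : 0 ≤ σ)
    (hF : h * |F| ≤ σ) (hp : |wp| ≤ K) (hm : |wm| ≤ K) :
    τ * F * ((wp - wm) / (2 * h)) + (τ / 2) * σ * ((wp - 2 * w0 + wm) / h ^ 2)
      ≤ τ * σ / h ^ 2 * K - τ * σ / h ^ 2 * w0 := by
  have h1 : 0 ≤ σ + h * F := by cases abs_cases F with
    | inl hc => nlinarith
    | inr hc => nlinarith
  have h2 : 0 ≤ σ - h * F := by cases abs_cases F with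
    | inl hc => nlinarith
    | inr hc => nlinarith
  have hne : h ≠ 0 := ne_of_gt hh
  have e : τ * F * ((wp - wm) / (2 * h)) + (τ / 2) * σ * ((wp - 2 * w0 + wm) / h ^ 2)
      + τ * σ / h ^ 2 * w0 = (τ / (2 * h ^ 2)) * ((σ + h * F) * wp + (σ - h * F) * wm) := by
    field_simp
    ring
  have k1 : (σ + h * F) * wp ≤ (σ + h * F) * K :=
    mul_le_mul_of_nonneg_left (le_of_abs_le hp) h1
  have k2 : (σ - h * F) * wm ≤ (σ - h * F) * K :=
    mul_le_mul_of_nonneg_left (le_of_abs_le hm) h2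
  have k3 : (τ / (2 * h ^ 2)) * ((σ + h * F) * wp + (σ - h * F) * wm)
      ≤ (τ / (2 * h ^ 2)) * ((σ + h * F) * K + (σ - h * F) * K) := by
    apply mul_le_mul_of_nonneg_left (by linarith) (by positivity)
  have k4 : (τ / (2 * h ^ 2)) * ((σ + h * F) * K + (σ - h * F) * K) = τ * σ / h ^ 2 * K := by
    field_simp
    ring
  linarith


lemma spaceGrid_add {d : ℕ} {h : ℝ} {x : Fin d → ℝ} (hx : spaceGrid h x) (i : Fin d) (ε : ℤ) :
    spaceGrid h (Function.update x i (x i + ε * h)) := by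
  intro j
  by_cases hj : j = i
  · subst hj
    obtain ⟨z, hz⟩ := hx j
    exact ⟨z + ε, by simp [Function.update_self, hz]; push_cast; ring⟩
  · simpa [Function.update_of_ne hj] using hx j




lemma abs_apply_le_nrm {d : ℕ} (v : Fin d → ℝ) (i : Fin d) : |v i| ≤ nrm v := by
  rw [nrm, ← Real.sqrt_sq_eq_abs]
  exact Real.sqrt_le_sqrt (Finset.single_le_sum (fun j _ => sq_nonneg (v j)) (Finset.mem_univ i))


section Ham

variable {d m₁ m₂ : ℕ}
    {A : Set (Fin m₁ → ℝ)} {B : Set (Fin m₂ → ℝ)}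
    (hA : IsCompact A) (hAne : A.Nonempty) (hB : IsCompact B) (hBne : B.Nonempty)
    {c : ℝ → (Fin d → ℝ) → (Fin m₁ → ℝ) → (Fin m₂ → ℝ) → ℝ}
    {f : ℝ → (Fin d → ℝ) → (Fin m₁ → ℝ) → (Fin m₂ → ℝ) → Fin d → ℝ}
    (hc_cont : Continuous fun q : ℝ × (Fin d → ℝ) × (Fin m₁ → ℝ) × (Fin m₂ → ℝ) =>
      c q.1 q.2.1 q.2.2.1 q.2.2.2)
    (hf_cont : Continuous fun q : ℝ × (Fin d → ℝ) × (Fin m₁ → ℝ) × (Fin m₂ → ℝ) =>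
      f q.1 q.2.1 q.2.2.1 q.2.2.2)
    {Mc Mf : ℝ}
    (hMc : ∀ t x a b, |c t x a b| ≤ Mc)
    (hMf : ∀ t x a b, nrm (f t x a b) ≤ Mf)

include hA hAne hB hBne hc_cont hf_cont hMc hMf

lemma ham_le (t : ℝ) (x p q : Fin d → ℝ) (D : ℝ)
    (hD : ∀ a ∈ A, ∀ b ∈ B, ∑ i, (p i - q i) * f t x a b i ≤ D) :
    Ham A B c f t x p ≤ Ham A B c f t x q + D := by
  have hfb : ∀ t x a b (i : Fin d), |f t x a b i| ≤ Mf := fun t x a b i =>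
    (abs_apply_le_nrm _ i).trans (hMf t x a b)
  have hLb : ∀ (r : Fin d → ℝ) a b, |Lrun c f t x r a b| ≤ Mc + (∑ i, |r i|) * Mf := by
    intro r a b
    have h1 : |∑ i, r i * f t x a b i| ≤ ∑ i, |r i| * Mf :=
      (Finset.abs_sum_le_sum_abs _ _).trans <| Finset.sum_le_sum fun i _ => by
        rw [abs_mul]; exact mul_le_mul_of_nonneg_left (hfb t x a b i) (abs_nonneg _)
    calc |Lrun c f t x r a b| ≤ |c t x a b| + |∑ i, r i * f t x a b i| := abs_add_le _ _
      _ ≤ Mc + (∑ i, |r i|) * Mf := by rw [Finset.sum_mul]; exact add_le_add (hMc t x a b) h1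
  have hcont : ∀ (r : Fin d → ℝ) (b : Fin m₂ → ℝ), Continuous fun a => Lrun c f t x r a b := by
    intro r b
    have hmap : Continuous fun a : Fin m₁ → ℝ =>
        ((t, x, a, b) : ℝ × (Fin d → ℝ) × (Fin m₁ → ℝ) × (Fin m₂ → ℝ)) := by fun_prop
    exact (hc_cont.comp hmap).add (continuous_finset_sum _ fun i _ =>
      continuous_const.mul ((continuous_apply i).comp (hf_cont.comp hmap)))
  -- lower/upper bound facts about the inner infimum
  have hbdd : ∀ (r : Fin d → ℝ) (b : Fin m₂ → ℝ),
      BddBelow ((fun a => Lrun c f t x r a b) '' A) := by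
    rintro r b
    exact ⟨-(Mc + (∑ i, |r i|) * Mf), by rintro _ ⟨a, ha, rfl⟩; exact neg_le_of_abs_le (hLb r a b)⟩
  have hI_le : ∀ (r : Fin d → ℝ) b a, a ∈ A →
      sInf ((fun a => Lrun c f t x r a b) '' A) ≤ Lrun c f t x r a b :=
    fun r b a ha => csInf_le (hbdd r b) ⟨a, ha, rfl⟩
  have hBddA : BddAbove ((fun b => sInf ((fun a => Lrun c f t x q a b) '' A)) '' B) := by
    refine ⟨Mc + (∑ i, |q i|) * Mf, ?_⟩
    rintro _ ⟨b, hb, rfl⟩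
    obtain ⟨a, ha⟩ := hAne
    exact (hI_le q b a ha).trans (le_of_abs_le (hLb q a b))
  apply csSup_le (hBne.image _)
  rintro _ ⟨b, hb, rfl⟩
  obtain ⟨a₀, ha₀, hmin⟩ := hA.exists_isMinOn hAne (hcont q b).continuousOn
  have h1 : sInf ((fun a => Lrun c f t x p a b) '' A) ≤ Lrun c f t x p a₀ b := hI_le p b a₀ ha₀
  have h2 : Lrun c f t x p a₀ b
      = Lrun c f t x q a₀ b + ∑ i, (p i - q i) * f t x a₀ b i := by
    simp only [Lrun, sub_mul, Finset.sum_sub_distrib]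
    ring
  have h3 : Lrun c f t x q a₀ b = sInf ((fun a => Lrun c f t x q a b) '' A) := by
    refine le_antisymm (le_csInf (hAne.image _) ?_) (hI_le q b a₀ ha₀)
    rintro _ ⟨a, ha, rfl⟩
    exact hmin ha
  have h4 : sInf ((fun a => Lrun c f t x q a b) '' A) ≤ Ham A B c f t x q :=
    le_csSup hBddA ⟨b, hb, rfl⟩
  have h5 := hD a₀ ha₀ b hb
  linarith

lemma ham_sub_le (t : ℝ) (x p q : Fin d → ℝ) :
    ∃ a ∈ A, ∃ b ∈ B, Ham A B c f t x p
      ≤ Ham A B c f t x q + ∑ i, (p i - q i) * f t x a b i := by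
  have hmap : Continuous fun ab : (Fin m₁ → ℝ) × (Fin m₂ → ℝ) =>
      ((t, x, ab.1, ab.2) : ℝ × (Fin d → ℝ) × (Fin m₁ → ℝ) × (Fin m₂ → ℝ)) := by fun_prop
  have hgc : Continuous fun ab : (Fin m₁ → ℝ) × (Fin m₂ → ℝ) =>
      ∑ i, (p i - q i) * f t x ab.1 ab.2 i :=
    continuous_finset_sum _ fun i _ =>
      continuous_const.mul ((continuous_apply i).comp (hf_cont.comp hmap))
  obtain ⟨ab, hab, hmax⟩ := (hA.prod hB).exists_isMaxOn (hAne.prod hBne) hgc.continuousOn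
  refine ⟨ab.1, hab.1, ab.2, hab.2, ?_⟩
  exact ham_le hA hAne hB hBne hc_cont hf_cont hMc hMf t x p q _
    (fun a ha b hb => hmax (Set.mk_mem_prod ha hb))

end Ham


section Step

variable {d m₁ m₂ : ℕ}
    {A : Set (Fin m₁ → ℝ)} {B : Set (Fin m₂ → ℝ)}
    (hA : IsCompact A) (hAne : A.Nonempty) (hB : IsCompact B) (hBne : B.Nonempty)
    {c : ℝ → (Fin d → ℝ) → (Fin m₁ → ℝ) → (Fin m₂ → ℝ) → ℝ}
    {f : ℝ → (Fin d → ℝ) → (Fin m₁ → ℝ) → (Fin m₂ → ℝ) → Fin d → ℝ}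
    (hc_cont : Continuous fun q : ℝ × (Fin d → ℝ) × (Fin m₁ → ℝ) × (Fin m₂ → ℝ) =>
      c q.1 q.2.1 q.2.2.1 q.2.2.2)
    (hf_cont : Continuous fun q : ℝ × (Fin d → ℝ) × (Fin m₁ → ℝ) × (Fin m₂ → ℝ) =>
      f q.1 q.2.1 q.2.2.1 q.2.2.2)
    {Mc Mf : ℝ}
    (hMc : ∀ t x a b, |c t x a b| ≤ Mc)
    (hMf : ∀ t x a b, nrm (f t x a b) ≤ Mf)

include hA hAne hB hBne hc_cont hf_cont hMc hMf

lemma step_le (t τ h : ℝ) (hτ0 : 0 < τ) (hh0 : 0 < h)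
    (x : Fin d → ℝ) (hx : spaceGrid h x)
    (σ : Fin d → ℝ) (hσ0 : ∀ i, 0 ≤ σ i)
    (hσf : ∀ (i : Fin d) a b, h * |f t x a b i| ≤ σ i)
    (hσs : τ * ∑ i, σ i ≤ h ^ 2)
    (φ ψ : (Fin d → ℝ) → ℝ) (K : ℝ)
    (hw : ∀ y, spaceGrid h y → |φ y - ψ y| ≤ K) :
    (φ x + τ * Ham A B c f t x (cgrad h φ x) + (τ / 2) * ∑ i, σ i * lap1 h φ x i)
      - (ψ x + τ * Ham A B c f t x (cgrad h ψ x) + (τ / 2) * ∑ i, σ i * lap1 h ψ x i) ≤ K := by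
  obtain ⟨a, ha, b, hb, hH⟩ := ham_sub_le hA hAne hB hBne hc_cont hf_cont hMc hMf
    t x (cgrad h φ x) (cgrad h ψ x)
  set w : (Fin d → ℝ) → ℝ := fun y => φ y - ψ y with hwdef
  have hwx : |w x| ≤ K := hw x hx
  have hxp : ∀ i : Fin d, spaceGrid h (Function.update x i (x i + h)) := by
    intro i
    have := spaceGrid_add hx i 1
    simpa using this
  have hxm : ∀ i : Fin d, spaceGrid h (Function.update x i (x i - h)) := by
    intro i
    have := spaceGrid_add hx i (-1)
    simpa [sub_eq_add_neg] using this
  have hKp : ∀ i, |w (Function.update x i (x i + h))| ≤ K := fun i => hw _ (hxp i)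
  have hKm : ∀ i, |w (Function.update x i (x i - h))| ≤ K := fun i => hw _ (hxm i)
  have hterm : ∀ i : Fin d,
      τ * (cgrad h φ x i - cgrad h ψ x i) * f t x a b i
        + (τ / 2) * σ i * (lap1 h φ x i - lap1 h ψ x i)
      ≤ τ * σ i / h ^ 2 * K - τ * σ i / h ^ 2 * w x := by
    intro i
    have e1 : cgrad h φ x i - cgrad h ψ x i
        = (w (Function.update x i (x i + h)) - w (Function.update x i (x i - h))) / (2 * h) := by
      simp only [cgrad, hwdef]
      ring
    have e2 : lap1 h φ x i - lap1 h ψ x i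
        = (w (Function.update x i (x i + h)) - 2 * w x + w (Function.update x i (x i - h)))
          / h ^ 2 := by
      simp only [lap1, hwdef]
      ring
    rw [e1, e2]
    have := per_coord τ h (σ i) (f t x a b i) K (w x)
      (w (Function.update x i (x i + h))) (w (Function.update x i (x i - h)))
      hτ0 hh0 (hσ0 i) (hσf i a b) (hKp i) (hKm i)
    nlinarith [this]
  have hsum := Finset.sum_le_sum (fun i (_ : i ∈ Finset.univ) => hterm i)
  have hr : ∀ i : Fin d, τ * σ i / h ^ 2 * K - τ * σ i / h ^ 2 * w x
      = σ i * (τ / h ^ 2 * (K - w x)) := fun i => by ring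
  rw [Finset.sum_congr rfl (fun i _ => hr i), ← Finset.sum_mul] at hsum
  have hKw : 0 ≤ K - w x := by
    have := (abs_le.mp hwx).2
    linarith
  have h5 : (∑ i, σ i) * (τ / h ^ 2 * (K - w x)) ≤ K - w x := by
    have hs0 : 0 ≤ ∑ i, σ i := Finset.sum_nonneg fun i _ => hσ0 i
    have h6 : (∑ i, σ i) * (τ / h ^ 2) ≤ 1 := by
      rw [← div_le_one (by positivity : (0:ℝ) < h ^ 2)] at hσs
      calc (∑ i, σ i) * (τ / h ^ 2) = τ * (∑ i, σ i) / h ^ 2 := by ring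
        _ ≤ 1 := hσs
    calc (∑ i, σ i) * (τ / h ^ 2 * (K - w x)) = ((∑ i, σ i) * (τ / h ^ 2)) * (K - w x) := by ring
      _ ≤ 1 * (K - w x) := mul_le_mul_of_nonneg_right h6 hKw
      _ = K - w x := one_mul _
  -- assemble
  have hH' : τ * Ham A B c f t x (cgrad h φ x)
      ≤ τ * Ham A B c f t x (cgrad h ψ x)
        + ∑ i, τ * (cgrad h φ x i - cgrad h ψ x i) * f t x a b i := by
    have := mul_le_mul_of_nonneg_left hH (le_of_lt hτ0)
    rw [mul_add, Finset.mul_sum] at this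
    calc τ * Ham A B c f t x (cgrad h φ x)
        ≤ τ * Ham A B c f t x (cgrad h ψ x)
          + ∑ i, τ * ((cgrad h φ x i - cgrad h ψ x i) * f t x a b i) := this
      _ = _ := by rw [Finset.sum_congr rfl (fun i _ => by ring : ∀ i ∈ Finset.univ,
            τ * ((cgrad h φ x i - cgrad h ψ x i) * f t x a b i)
              = τ * (cgrad h φ x i - cgrad h ψ x i) * f t x a b i)]
  have hlap : (τ / 2) * ∑ i, σ i * lap1 h φ x i - (τ / 2) * ∑ i, σ i * lap1 h ψ x i
      = ∑ i, (τ / 2) * σ i * (lap1 h φ x i - lap1 h ψ x i) := by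
    rw [Finset.mul_sum, Finset.mul_sum, ← Finset.sum_sub_distrib]
    exact Finset.sum_congr rfl fun i _ => by ring
  have hX : ∑ i, (τ * (cgrad h φ x i - cgrad h ψ x i) * f t x a b i
      + (τ / 2) * σ i * (lap1 h φ x i - lap1 h ψ x i))
      = (∑ i, τ * (cgrad h φ x i - cgrad h ψ x i) * f t x a b i)
        + ∑ i, (τ / 2) * σ i * (lap1 h φ x i - lap1 h ψ x i) := Finset.sum_add_distrib
  have hwx0 : φ x - ψ x = w x := rfl
  linarith [hsum, hH', hlap, hX, h5]

end Step


/-- stability of the discrete scheme under approximate solutions: under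
(N2), if a bounded grid function `u` satisfies the scheme (4.2) up to an error `E` and the
terminal condition up to an error `η`, then `sup |u − V^{τ,h}| ≤ T·E + η`. -/
theorem discrete_scheme_stability
    {d m₁ m₂ : ℕ} (hd : 0 < d)
    {A : Set (Fin m₁ → ℝ)} {B : Set (Fin m₂ → ℝ)}
    (hA : IsCompact A) (hAne : A.Nonempty) (hB : IsCompact B) (hBne : B.Nonempty)
    (c : ℝ → (Fin d → ℝ) → (Fin m₁ → ℝ) → (Fin m₂ → ℝ) → ℝ)
    (f : ℝ → (Fin d → ℝ) → (Fin m₁ → ℝ) → (Fin m₂ → ℝ) → Fin d → ℝ)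
    (hc_cont : Continuous fun q : ℝ × (Fin d → ℝ) × (Fin m₁ → ℝ) × (Fin m₂ → ℝ) =>
      c q.1 q.2.1 q.2.2.1 q.2.2.2)
    (hf_cont : Continuous fun q : ℝ × (Fin d → ℝ) × (Fin m₁ → ℝ) × (Fin m₂ → ℝ) =>
      f q.1 q.2.1 q.2.2.1 q.2.2.2)
    (Mc Mf Mg : ℝ)
    (hMc : ∀ t x a b, |c t x a b| ≤ Mc)
    (hMf : ∀ t x a b, nrm (f t x a b) ≤ Mf)
    (Sg : Fin d → ℝ → (Fin d → ℝ) → ℝ)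
    (hSg_nonneg : ∀ i t x, 0 ≤ Sg i t x)
    (MS : ℝ) (hMS : ∀ i t x, Sg i t x ≤ MS)
    (g : (Fin d → ℝ) → ℝ) (hMg : ∀ x, |g x| ≤ Mg)
    (T τ h ν : ℝ) (hT : 0 < T)
    (hτ : τ ∈ Set.Ioo (0:ℝ) 1) (hh : h ∈ Set.Ioo (0:ℝ) 1)
    (hTτ : ∃ N : ℕ, T = N * τ) (hν : 0 ≤ ν)
    (hN2a : ∀ i t x a b, h * |f t x a b i| ≤ ν + Sg i t x)
    (hN2b : ∀ t x, (d : ℝ) * ν + ∑ i, Sg i t x ≤ h ^ 2 / τ)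
    (V : ℝ → (Fin d → ℝ) → ℝ)
    (hV_eq : ∀ t x, timeGrid τ T t → τ ≤ t → spaceGrid h x →
      dtT τ V t x + Ham A B c f t x (cgrad h (V t) x)
        = -(1/2) * ∑ i, (Sg i t x + ν) * lap1 h (V t) x i)
    (hV_T : ∀ x, spaceGrid h x → V T x = g x)
    (u : ℝ → (Fin d → ℝ) → ℝ)
    (hu_bdd : ∃ M : ℝ, ∀ t x, timeGrid τ T t → spaceGrid h x → |u t x| ≤ M)
    (E η : ℝ) (hE : 0 ≤ E) (hη : 0 ≤ η)
    (hu_approx : ∀ t x, timeGrid τ T t → τ ≤ t → spaceGrid h x →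
      |dtT τ u t x + Ham A B c f t x (cgrad h (u t) x)
          + (1/2) * ∑ i, (Sg i t x + ν) * lap1 h (u t) x i| ≤ E)
    (hu_T : ∀ x, spaceGrid h x → |u T x - g x| ≤ η) :
    ∀ t x, timeGrid τ T t → spaceGrid h x → |u t x - V t x| ≤ T * E + η := by
  obtain ⟨hτ0, hτ1⟩ := hτ
  obtain ⟨hh0, hh1⟩ := hh
  obtain ⟨N, hTN⟩ := hTτ
  have hτne : τ ≠ 0 := ne_of_gt hτ0
  -- σ hypotheses
  have hσ0 : ∀ (t : ℝ) (x : Fin d → ℝ) (i : Fin d), 0 ≤ Sg i t x + ν :=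
    fun t x i => add_nonneg (hSg_nonneg i t x) hν
  have hσf : ∀ (t : ℝ) (x : Fin d → ℝ) (i : Fin d) a b,
      h * |f t x a b i| ≤ Sg i t x + ν := fun t x i a b => by
    have := hN2a i t x a b; linarith
  have hσs : ∀ (t : ℝ) (x : Fin d → ℝ), τ * ∑ i, (Sg i t x + ν) ≤ h ^ 2 := by
    intro t x
    have h1 : ∑ i, (Sg i t x + ν) = (∑ i, Sg i t x) + (d : ℝ) * ν := by
      rw [Finset.sum_add_distrib, Finset.sum_const, Finset.card_univ, Fintype.card_fin,
        nsmul_eq_mul]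
    have h2 := hN2b t x
    rw [h1]
    have : (∑ i, Sg i t x) + (d:ℝ) * ν ≤ h ^ 2 / τ := by linarith
    calc τ * ((∑ i, Sg i t x) + (d:ℝ) * ν) ≤ τ * (h ^ 2 / τ) :=
          mul_le_mul_of_nonneg_left this (le_of_lt hτ0)
      _ = h ^ 2 := by field_simp
  -- one-step estimate
  have one_step : ∀ t : ℝ, timeGrid τ T t → τ ≤ t → ∀ K : ℝ,
      (∀ y, spaceGrid h y → |u t y - V t y| ≤ K) →
      ∀ x, spaceGrid h x → |u (t - τ) x - V (t - τ) x| ≤ K + τ * E := by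
    intro t htg htτ' K hK x hx
    have hVx := hV_eq t x htg htτ' hx
    have hux := hu_approx t x htg htτ' hx
    set Su := u t x + τ * Ham A B c f t x (cgrad h (u t) x)
      + (τ / 2) * ∑ i, (Sg i t x + ν) * lap1 h (u t) x i with hSu
    set Sv := V t x + τ * Ham A B c f t x (cgrad h (V t) x)
      + (τ / 2) * ∑ i, (Sg i t x + ν) * lap1 h (V t) x i with hSv
    have hVre : V (t - τ) x = Sv := by
      rw [dtT] at hVx
      field_simp at hVx
      rw [hSv]
      linarith
    have huxe : |u (t - τ) x - Su| ≤ τ * E := by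
      have h2 : u (t - τ) x - Su = -(τ * (dtT τ u t x + Ham A B c f t x (cgrad h (u t) x)
          + (1/2) * ∑ i, (Sg i t x + ν) * lap1 h (u t) x i)) := by
        rw [hSu, dtT]
        field_simp
        ring
      rw [h2, abs_neg, abs_mul, abs_of_pos hτ0]
      exact mul_le_mul_of_nonneg_left hux (le_of_lt hτ0)
    have h1 : Su - Sv ≤ K :=
      step_le hA hAne hB hBne hc_cont hf_cont hMc hMf t τ h hτ0 hh0 x hx
        (fun i => Sg i t x + ν) (hσ0 t x) (hσf t x) (hσs t x) (u t) (V t) K hK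
    have h2 : Sv - Su ≤ K :=
      step_le hA hAne hB hBne hc_cont hf_cont hMc hMf t τ h hτ0 hh0 x hx
        (fun i => Sg i t x + ν) (hσ0 t x) (hσf t x) (hσs t x) (V t) (u t) K
        (fun y hy => by rw [abs_sub_comm]; exact hK y hy)
    have h3 : |u (t - τ) x - V (t - τ) x| ≤ |u (t - τ) x - Su| + |Su - V (t - τ) x| :=
      abs_sub_le _ _ _
    have h4 : |Su - V (t - τ) x| ≤ K := by
      rw [hVre, abs_le]
      constructor <;> linarith
    linarith
  -- induction
  have main : ∀ j : ℕ, j ≤ N → ∀ x, spaceGrid h x →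
      |u (T - j * τ) x - V (T - j * τ) x| ≤ j * τ * E + η := by
    intro j
    induction j with
    | zero =>
      intro _ x hx
      simp only [Nat.cast_zero, zero_mul, sub_zero]
      rw [hV_T x hx]
      simpa using hu_T x hx
    | succ j ih =>
      intro hjN x hx
      have hj : j ≤ N := Nat.le_of_succ_le hjN
      have hjlt : j < N := hjN
      set t := T - j * τ with ht
      have htg : timeGrid τ T t := by
        constructor
        · exact ⟨N - j, by rw [ht, hTN, Nat.cast_sub hj]; ring⟩
        · rw [ht]
          have : 0 ≤ (j : ℝ) * τ := by positivity
          linarith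
      have htτ' : τ ≤ t := by
        rw [ht, hTN]
        have hcast : (j : ℝ) + 1 ≤ (N : ℝ) := by exact_mod_cast hjN
        nlinarith
      have := one_step t htg htτ' ((j : ℝ) * τ * E + η) (fun y hy => ih hj y hy) x hx
      have heq : t - τ = T - (j + 1 : ℕ) * τ := by
        rw [ht]; push_cast; ring
      rw [heq] at this
      calc |u (T - (j + 1 : ℕ) * τ) x - V (T - (j + 1 : ℕ) * τ) x|
          ≤ (j : ℝ) * τ * E + η + τ * E := this
        _ = ((j + 1 : ℕ) : ℝ) * τ * E + η := by push_cast; ring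
  -- conclude
  intro t x htg hx
  obtain ⟨⟨k, htk⟩, htT⟩ := htg
  have hkN : k ≤ N := by
    have : (k : ℝ) * τ ≤ (N : ℝ) * τ := by rw [← htk, ← hTN]; exact htT
    have := le_of_mul_le_mul_right this hτ0
    exact_mod_cast this
  have hteq : t = T - ((N - k : ℕ) : ℝ) * τ := by
    rw [htk, hTN, Nat.cast_sub hkN]; ring
  have hb := main (N - k) (Nat.sub_le N k) x hx
  rw [← hteq] at hb
  have hle : ((N - k : ℕ) : ℝ) * τ * E ≤ T * E := by
    have h1 : ((N - k : ℕ) : ℝ) ≤ (N : ℝ) := by exact_mod_cast Nat.sub_le N k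
    have h2 : ((N - k : ℕ) : ℝ) * τ ≤ (N : ℝ) * τ :=
      mul_le_mul_of_nonneg_right h1 (le_of_lt hτ0)
    rw [hTN]
    exact mul_le_mul_of_nonneg_right h2 hE
  linarith
end
end
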